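/- arXiv:2312.13446 — 6 statements merged into one kernel-verified Lean document; each statement's English description precedes it below -/
import Mathlib

section
/- For every smooth compactly supported function f : ℝ² → ℂ and every compact set K ⊆ ℝ² there exist constants C > 0 and T > 0 such that for all t ≥ T and all x ∈ K, |(1/(2πt)) ∫_{{y : ‖x−y‖ < t}} (1 − ‖x−y‖²/t²)^{−1/2} f(y) dy − (1/(2πt)) ∫_{ℝ²} f(y) dy| ≤ C t^{−3}. -/
open MeasureTheory

/-- Large-time asymptotics of the free wave evolution on `ℝ²`:
`w(x,t) = (1/(2πt)) ∫ f + O(t⁻³)` uniformly for `x` in a compact set. -/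
theorem free_wave_asymptotics
    (f : EuclideanSpace ℝ (Fin 2) → ℂ)
    (hf : ContDiff ℝ (⊤ : ℕ∞) f) (hsupp : HasCompactSupport f)
    (K : Set (EuclideanSpace ℝ (Fin 2))) (hK : IsCompact K) :
    ∃ C > (0 : ℝ), ∃ T > (0 : ℝ), ∀ t : ℝ, T ≤ t → ∀ x ∈ K,
      ‖(1 / (2 * Real.pi * t)) •
          (∫ y in {y : EuclideanSpace ℝ (Fin 2) | ‖x - y‖ < t},
            (((1 - ‖x - y‖ ^ 2 / t ^ 2) : ℝ) ^ (-(1 / 2 : ℝ))) • f y)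
        - (1 / (2 * Real.pi * t)) • (∫ y, f y)‖ ≤ C * t ^ (-(3 : ℝ)) := by
  obtain ⟨R, hR⟩ := Metric.isBounded_iff.1 (hK.union hsupp).isBounded
  set M : ℝ := max R 1 with hMdef
  have hM1 : (1:ℝ) ≤ M := le_max_right _ _
  have hM0 : (0:ℝ) < M := lt_of_lt_of_le one_pos hM1
  have hfc : Continuous f := hf.continuous
  have hfi : Integrable f := hfc.integrable_of_hasCompactSupport hsupp
  have hdist : ∀ x ∈ K, ∀ y ∈ tsupport f, ‖x - y‖ ≤ M := by
    intro x hx y hy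
    calc ‖x - y‖ = dist x y := (dist_eq_norm x y).symm
    _ ≤ R := hR (Or.inl hx) (Or.inr hy)
    _ ≤ M := le_max_left _ _
  set Jf : ℝ := ∫ y, ‖f y‖ with hJfdef
  have hJf : 0 ≤ Jf := integral_nonneg fun y => norm_nonneg _
  have hpi := Real.pi_pos
  refine ⟨M^2 * Jf / (2*Real.pi) + 1, by positivity, 2*M, by positivity, ?_⟩
  intro t ht x hx
  have ht0 : (0:ℝ) < t := lt_of_lt_of_le (by positivity) ht
  -- key pointwise estimate on the support
  have key : ∀ y ∈ tsupport f,
      |(1 - ‖x - y‖ ^ 2 / t ^ 2 : ℝ) ^ (-(1/2 : ℝ)) - 1| ≤ M^2 / t^2 := by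
    intro y hy
    have hu : ‖x - y‖ ≤ M := hdist x hx y hy
    have hu0 : (0:ℝ) ≤ ‖x - y‖ := norm_nonneg _
    set s : ℝ := ‖x - y‖ ^ 2 / t ^ 2 with hsdef
    have hs0 : 0 ≤ s := by positivity
    have hsM : s ≤ M^2 / t^2 := by
      apply div_le_div_of_nonneg_right ?_ (by positivity) |>.trans_eq rfl
      · nlinarith
    have hs14 : s ≤ 1/4 := by
      rw [hsdef, div_le_iff₀ (by positivity)]
      nlinarith
    have hbase : (0:ℝ) < 1 - s := by linarith
    set q : ℝ := Real.sqrt (1 - s) with hqdef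
    have hq0 : 0 < q := Real.sqrt_pos.2 hbase
    have hrw : (1 - s) ^ (-(1/2 : ℝ)) = q⁻¹ := by
      rw [Real.rpow_neg hbase.le, hqdef, Real.sqrt_eq_rpow]
    have hq1 : q ≤ 1 := by
      rw [hqdef]
      calc Real.sqrt (1 - s) ≤ Real.sqrt 1 := Real.sqrt_le_sqrt (by linarith)
      _ = 1 := Real.sqrt_one
    have hlow : 1 ≤ q⁻¹ := by
      rw [inv_eq_one_div, le_div_iff₀ hq0, one_mul]; exact hq1
    have hsq : 1 ≤ (1 + s) * q := by
      have h2 : Real.sqrt ((1+s)^2 * (1-s)) = (1+s) * q := by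
        rw [hqdef, Real.sqrt_mul (by positivity), Real.sqrt_sq (by linarith)]
      have h3 : (1:ℝ) ≤ (1+s)^2 * (1-s) := by nlinarith [mul_le_mul_of_nonneg_left hs14 hs0, mul_le_mul_of_nonneg_left (mul_le_mul_of_nonneg_left hs14 hs0) hs0]
      calc (1:ℝ) = Real.sqrt 1 := Real.sqrt_one.symm
      _ ≤ Real.sqrt ((1+s)^2 * (1-s)) := Real.sqrt_le_sqrt h3
      _ = (1+s) * q := h2
    have hup : q⁻¹ ≤ 1 + s := by
      rw [inv_eq_one_div, div_le_iff₀ hq0]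
      linarith [mul_comm (1+s) q]
    rw [hrw]
    rw [abs_le]
    constructor
    · have : 0 ≤ M^2 / t^2 := by positivity
      linarith
    · linarith
  -- the integrand as a function
  have hcont : Continuous fun y : EuclideanSpace ℝ (Fin 2) =>
      ((1 - ‖x - y‖ ^ 2 / t ^ 2 : ℝ) ^ (-(1/2 : ℝ))) • f y := by
    rw [continuous_iff_continuousAt]
    intro y₀
    by_cases hb : (1 - ‖x - y₀‖ ^ 2 / t ^ 2 : ℝ) = 0
    · have hy₀ : y₀ ∉ tsupport f := by
        intro hy
        have h1 := hdist x hx y₀ hy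
        have h2 : ‖x - y₀‖ ^ 2 = t ^ 2 := by
          field_simp at hb
          nlinarith [hb]
        nlinarith [norm_nonneg (x - y₀)]
      have hev : (fun y : EuclideanSpace ℝ (Fin 2) =>
          ((1 - ‖x - y‖ ^ 2 / t ^ 2 : ℝ) ^ (-(1/2 : ℝ))) • f y)
          =ᶠ[nhds y₀] fun _ => (0:ℂ) := by
        filter_upwards [(isOpen_compl_iff.2 (isClosed_tsupport f)).mem_nhds hy₀] with y hy
        rw [image_eq_zero_of_notMem_tsupport hy, smul_zero]
      exact hev.continuousAt
    · have hb' : ContinuousAt (fun y : EuclideanSpace ℝ (Fin 2) =>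
          (1 - ‖x - y‖ ^ 2 / t ^ 2 : ℝ)) y₀ := by fun_prop
      have hc : ContinuousAt (fun y : EuclideanSpace ℝ (Fin 2) =>
          ((1 - ‖x - y‖ ^ 2 / t ^ 2 : ℝ) ^ (-(1/2 : ℝ)))) y₀ :=
        hb'.rpow_const (Or.inl hb)
      exact hc.smul hfc.continuousAt
  have hInt : Integrable (fun y : EuclideanSpace ℝ (Fin 2) =>
      ((1 - ‖x - y‖ ^ 2 / t ^ 2 : ℝ) ^ (-(1/2 : ℝ))) • f y) :=
    hcont.integrable_of_hasCompactSupport (hsupp.smul_left (f := fun y : EuclideanSpace ℝ (Fin 2) =>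
        ((1 - ‖x - y‖ ^ 2 / t ^ 2 : ℝ) ^ (-(1/2 : ℝ)))))
  -- the set integral is the full integral
  have hset : (∫ y in {y : EuclideanSpace ℝ (Fin 2) | ‖x - y‖ < t},
      (((1 - ‖x - y‖ ^ 2 / t ^ 2) : ℝ) ^ (-(1 / 2 : ℝ))) • f y)
      = ∫ y, (((1 - ‖x - y‖ ^ 2 / t ^ 2) : ℝ) ^ (-(1 / 2 : ℝ))) • f y := by
    apply setIntegral_eq_integral_of_forall_compl_eq_zero
    intro y hy
    have hfy : f y = 0 := by
      by_contra h
      have hyt := hdist x hx y (subset_tsupport f h)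
      have : ¬ ‖x - y‖ < t := hy
      push_neg at this
      linarith
    rw [hfy, smul_zero]
  have hsplit : (∫ y, (((1 - ‖x - y‖ ^ 2 / t ^ 2) : ℝ) ^ (-(1 / 2 : ℝ))) • f y)
      - (∫ y, f y)
      = ∫ y, ((((1 - ‖x - y‖ ^ 2 / t ^ 2) : ℝ) ^ (-(1 / 2 : ℝ)) - 1) • f y) := by
    rw [← integral_sub hInt hfi]
    congr 1
    funext y
    rw [sub_smul, one_smul]
  have hbound : ‖∫ y, ((((1 - ‖x - y‖ ^ 2 / t ^ 2) : ℝ) ^ (-(1 / 2 : ℝ)) - 1) • f y)‖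
      ≤ (M^2 / t^2) * Jf := by
    have hptw : ∀ y, ‖(((1 - ‖x - y‖ ^ 2 / t ^ 2 : ℝ) ^ (-(1 / 2 : ℝ)) - 1) • f y)‖
        ≤ (M^2 / t^2) * ‖f y‖ := by
      intro y
      by_cases h : f y = 0
      · simp [h]
      · rw [norm_smul, Real.norm_eq_abs]
        exact mul_le_mul_of_nonneg_right (key y (subset_tsupport f h)) (norm_nonneg _)
    have hgint : Integrable (fun y => (M^2 / t^2) * ‖f y‖) := hfi.norm.const_mul _
    calc ‖∫ y, ((((1 - ‖x - y‖ ^ 2 / t ^ 2) : ℝ) ^ (-(1 / 2 : ℝ)) - 1) • f y)‖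
        ≤ ∫ y, (M^2 / t^2) * ‖f y‖ :=
          norm_integral_le_of_norm_le hgint (Filter.Eventually.of_forall hptw)
      _ = (M^2 / t^2) * Jf := by rw [integral_const_mul, hJfdef]
  have htr : t ^ (-(3:ℝ)) = (t^3)⁻¹ := by
    rw [Real.rpow_neg ht0.le, show (3:ℝ) = ((3:ℕ):ℝ) by norm_num, Real.rpow_natCast]
  have ha : (0:ℝ) < 1 / (2 * Real.pi * t) := by positivity
  rw [← smul_sub, hset, hsplit, norm_smul, Real.norm_eq_abs, abs_of_pos ha, htr]
  calc (1 / (2 * Real.pi * t)) *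
        ‖∫ y, ((((1 - ‖x - y‖ ^ 2 / t ^ 2) : ℝ) ^ (-(1 / 2 : ℝ)) - 1) • f y)‖
      ≤ (1 / (2 * Real.pi * t)) * ((M^2 / t^2) * Jf) :=
        mul_le_mul_of_nonneg_left hbound ha.le
    _ = (M^2 * Jf / (2*Real.pi)) * (t^3)⁻¹ := by field_simp
    _ ≤ (M^2 * Jf / (2*Real.pi) + 1) * (t^3)⁻¹ := by
        apply mul_le_mul_of_nonneg_right (by linarith) (by positivity)
end

section
/- Suppose V : ℝ² → ℂ is continuous and vanishes outside the closed ball of radius R centered at the origin, u : ℝ² → ℂ is twice continuously differentiable and satisfies Δu = V·u on ℝ², and there is a constant C such that |u(x)| ≤ C/‖x‖ and ‖∇u(x)‖ ≤ C/‖x‖² for all x with ‖x‖ ≥ R. Then the function x ↦ ‖∇u(x)‖² + V(x)|u(x)|² is Lebesgue integrable on ℝ² and ∫_{ℝ²} (‖∇u(x)‖² + V(x)|u(x)|²) dx = 0. -/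
set_option maxHeartbeats 1000000

open MeasureTheory Filter Set Topology

/-- The `i`-th partial derivative of a function on `ℝ²`. -/
noncomputable def pd {F : Type*} [NormedAddCommGroup F] [NormedSpace ℝ F]
    (i : Fin 2) (u : EuclideanSpace ℝ (Fin 2) → F) (x : EuclideanSpace ℝ (Fin 2)) : F :=
  fderiv ℝ u x (EuclideanSpace.single i 1)

/-- The Laplacian `Δu = ∂₁²u + ∂₂²u` of a function on `ℝ²`. -/
noncomputable def lap {F : Type*} [NormedAddCommGroup F] [NormedSpace ℝ F]
    (u : EuclideanSpace ℝ (Fin 2) → F) (x : EuclideanSpace ℝ (Fin 2)) : F :=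
  ∑ i : Fin 2, fderiv ℝ (fun z => pd i u z) x (EuclideanSpace.single i 1)

/-- The energy identity `∫ (‖∇u‖² + V|u|²) = 0` for a decaying solution of `Δu = V u`
on `ℝ²` with compactly supported continuous potential `V`. -/
theorem energy_identity (R : ℝ) (V u : EuclideanSpace ℝ (Fin 2) → ℂ)
    (hV : Continuous V) (hVsupp : ∀ x : EuclideanSpace ℝ (Fin 2), R < ‖x‖ → V x = 0)
    (hu : ContDiff ℝ 2 u) (huV : ∀ x, lap u x = V x * u x)
    (C : ℝ)
    (hdecay : ∀ x : EuclideanSpace ℝ (Fin 2), R ≤ ‖x‖ →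
      ‖u x‖ ≤ C / ‖x‖ ∧ Real.sqrt (∑ i : Fin 2, ‖pd i u x‖ ^ 2) ≤ C / ‖x‖ ^ 2) :
    Integrable (fun x =>
      (((∑ i : Fin 2, ‖pd i u x‖ ^ 2 : ℝ)) : ℂ) + V x * ((‖u x‖ ^ 2 : ℝ) : ℂ)) ∧
    ∫ x, ((((∑ i : Fin 2, ‖pd i u x‖ ^ 2 : ℝ)) : ℂ) + V x * ((‖u x‖ ^ 2 : ℝ) : ℂ)) = 0 := by
  set f₀ : EuclideanSpace ℝ (Fin 2) → ℂ := fun x =>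
      (((∑ i : Fin 2, ‖pd i u x‖ ^ 2 : ℝ)) : ℂ) + V x * ((‖u x‖ ^ 2 : ℝ) : ℂ) with hf₀
  -- basic differentiability facts
  have hud : Differentiable ℝ u := hu.differentiable (by norm_num)
  have hfd : ContDiff ℝ 1 (fderiv ℝ u) := hu.fderiv_right (by norm_num)
  have hpd : ∀ i : Fin 2, ContDiff ℝ 1 (pd i u) := fun i => hfd.clm_apply contDiff_const
  have hpdc : ∀ i : Fin 2, Continuous (pd i u) := fun i => (hpd i).continuous
  have hconj : ∀ z, HasFDerivAt (fun w => (starRingEnd ℂ) (u w))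
      ((Complex.conjCLE.toContinuousLinearMap).comp (fderiv ℝ u z)) z := fun z =>
    (Complex.conjCLE.toContinuousLinearMap.hasFDerivAt).comp z (hud z).hasFDerivAt
  -- the divergence identity
  have key : ∀ z, (∑ i : Fin 2, fderiv ℝ
        (fun w => (starRingEnd ℂ) (u w) * pd i u w) z (EuclideanSpace.single i 1)) = f₀ z := by
    intro z
    have h1 : ∀ i : Fin 2, fderiv ℝ (fun w => (starRingEnd ℂ) (u w) * pd i u w) z
        (EuclideanSpace.single i 1)
        = ((‖pd i u z‖ ^ 2 : ℝ) : ℂ)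
          + (starRingEnd ℂ) (u z) * fderiv ℝ (pd i u) z (EuclideanSpace.single i 1) := by
      intro i
      rw [fderiv_fun_mul ((hconj z).differentiableAt) ((hpd i).differentiable one_ne_zero z)]
      rw [ContinuousLinearMap.add_apply, ContinuousLinearMap.smul_apply,
        ContinuousLinearMap.smul_apply, (hconj z).fderiv, ContinuousLinearMap.comp_apply]
      have h0 : (Complex.conjCLE.toContinuousLinearMap) (fderiv ℝ u z (EuclideanSpace.single i 1))
          = (starRingEnd ℂ) (pd i u z) := rfl
      rw [h0]
      have h2 : pd i u z • (starRingEnd ℂ) (pd i u z) = ((‖pd i u z‖ ^ 2 : ℝ) : ℂ) := by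
        rw [smul_eq_mul, Complex.mul_conj, Complex.normSq_eq_norm_sq]
      rw [h2, smul_eq_mul]
      ring
    rw [Finset.sum_congr rfl (fun i _ => h1 i), Finset.sum_add_distrib, ← Finset.mul_sum]
    have hlap : (∑ i : Fin 2, fderiv ℝ (pd i u) z (EuclideanSpace.single i 1)) = lap u z := rfl
    rw [hlap, huV z]
    have hu2 : u z * (starRingEnd ℂ) (u z) = ((‖u z‖ ^ 2 : ℝ) : ℂ) := by
      rw [Complex.mul_conj, Complex.normSq_eq_norm_sq]
    have h3 : (starRingEnd ℂ) (u z) * (V z * u z) = V z * ((‖u z‖ ^ 2 : ℝ) : ℂ) := by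
      rw [mul_comm ((starRingEnd ℂ) (u z)) (V z * u z), mul_assoc, hu2]
    rw [h3, hf₀]
    congr 1
    push_cast
    ring
  -- continuity of the integrand
  have hcont : Continuous f₀ := by
    apply Continuous.add
    · exact Complex.continuous_ofReal.comp
        (continuous_finset_sum _ fun i _ => ((hpdc i).norm.pow 2))
    · exact hV.mul (Complex.continuous_ofReal.comp ((hu.continuous.norm.pow 2)))
  set R' : ℝ := max R 1 with hR'
  have hR'1 : (1:ℝ) ≤ R' := le_max_right _ _
  have hR'0 : (0:ℝ) < R' := lt_of_lt_of_le one_pos hR'1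
  have hC0 : 0 ≤ C := by
    have h := (hdecay (EuclideanSpace.single 0 R') (by
      simp only [EuclideanSpace.norm_single, Real.norm_eq_abs, abs_of_pos hR'0]
      exact le_max_left _ _)).1
    rw [EuclideanSpace.norm_single, Real.norm_eq_abs, abs_of_pos hR'0] at h
    have h0 : 0 ≤ C / R' := le_trans (norm_nonneg _) h
    have hCR : C = (C / R') * R' := by field_simp
    rw [hCR]; exact mul_nonneg h0 hR'0.le
  -- integrability
  have hInt : Integrable f₀ := by
    obtain ⟨M₀, hM₀⟩ := (isCompact_closedBall (0 : EuclideanSpace ℝ (Fin 2))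
      R').exists_bound_of_continuousOn hcont.continuousOn
    set M : ℝ := max (16 * C ^ 2) ((max M₀ 0) * (1 + R') ^ 4) with hM
    have hbound : ∀ x, ‖f₀ x‖ ≤ M * ((1 + ‖x‖) ^ 4)⁻¹ := by
      intro x
      have h1x : (0:ℝ) < 1 + ‖x‖ := by positivity
      rcases le_or_gt ‖x‖ R' with hle | hgt
      · have hx : x ∈ Metric.closedBall (0 : EuclideanSpace ℝ (Fin 2)) R' := by
          simpa [Metric.mem_closedBall, dist_zero_right] using hle
        have h1 : ‖f₀ x‖ ≤ max M₀ 0 := le_trans (hM₀ x hx) (le_max_left _ _)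
        have h2 : (1 + ‖x‖) ^ 4 ≤ (1 + R') ^ 4 := by
          apply pow_le_pow_left₀ (by positivity) (by linarith)
        calc ‖f₀ x‖ ≤ max M₀ 0 := h1
          _ = (max M₀ 0) * (1 + R') ^ 4 * ((1 + R') ^ 4)⁻¹ := by field_simp
          _ ≤ M * ((1 + ‖x‖) ^ 4)⁻¹ := by
              apply mul_le_mul (le_max_right _ _)
                (by apply inv_anti₀ (by positivity) h2) (by positivity) (by positivity)
      · have hxR : R ≤ ‖x‖ := le_trans (le_max_left _ _) hgt.le
        have hx1 : (1:ℝ) ≤ ‖x‖ := le_trans hR'1 hgt.le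
        have hx0 : (0:ℝ) < ‖x‖ := lt_of_lt_of_le one_pos hx1
        have hVx : V x = 0 := hVsupp x (lt_of_le_of_lt (le_max_left _ _) hgt)
        have hnn : (0:ℝ) ≤ ∑ i : Fin 2, ‖pd i u x‖ ^ 2 :=
          Finset.sum_nonneg fun i _ => sq_nonneg _
        have hsum : (∑ i : Fin 2, ‖pd i u x‖ ^ 2) ≤ C ^ 2 / ‖x‖ ^ 4 := by
          have h := (hdecay x hxR).2
          have h2 : Real.sqrt (∑ i : Fin 2, ‖pd i u x‖ ^ 2) ^ 2 ≤ (C / ‖x‖ ^ 2) ^ 2 :=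
            pow_le_pow_left₀ (Real.sqrt_nonneg _) h 2
          rw [Real.sq_sqrt hnn] at h2
          calc (∑ i : Fin 2, ‖pd i u x‖ ^ 2) ≤ (C / ‖x‖ ^ 2) ^ 2 := h2
            _ = C ^ 2 / ‖x‖ ^ 4 := by rw [div_pow]; ring_nf
        have hf₀x : f₀ x = (((∑ i : Fin 2, ‖pd i u x‖ ^ 2 : ℝ)) : ℂ) := by
          rw [hf₀]; simp [hVx]
        have hnorm : ‖f₀ x‖ = ∑ i : Fin 2, ‖pd i u x‖ ^ 2 := by
          rw [hf₀x, Complex.norm_real, Real.norm_eq_abs, abs_of_nonneg hnn]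
        rw [hnorm]
        have h16 : (1 + ‖x‖) ^ 4 ≤ 16 * ‖x‖ ^ 4 := by
          calc (1 + ‖x‖) ^ 4 ≤ (2 * ‖x‖) ^ 4 :=
                pow_le_pow_left₀ (by positivity) (by linarith) 4
            _ = 16 * ‖x‖ ^ 4 := by ring
        calc (∑ i : Fin 2, ‖pd i u x‖ ^ 2) ≤ C ^ 2 / ‖x‖ ^ 4 := hsum
          _ = 16 * C ^ 2 * (16 * ‖x‖ ^ 4)⁻¹ := by field_simp
          _ ≤ M * ((1 + ‖x‖) ^ 4)⁻¹ := by
              apply mul_le_mul (le_max_left _ _)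
                (inv_anti₀ (by positivity) h16) (by positivity)
                (le_trans (by positivity) (le_max_left _ _))
    have hmaj : Integrable (fun x : EuclideanSpace ℝ (Fin 2) => M * ((1 + ‖x‖) ^ 4)⁻¹) := by
      have h4 : ((Module.finrank ℝ (EuclideanSpace ℝ (Fin 2)) : ℝ)) < (4:ℝ) := by
        simp [finrank_euclideanSpace]; norm_num
      have := (integrable_one_add_norm (E := EuclideanSpace ℝ (Fin 2)) (μ := volume)
        h4).const_mul M
      refine this.congr (Eventually.of_forall fun x => ?_)
      show M * (1 + ‖x‖) ^ (-(4:ℝ)) = M * ((1 + ‖x‖) ^ 4)⁻¹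
      rw [Real.rpow_neg (by positivity), show (4:ℝ) = ((4:ℕ):ℝ) by norm_num,
        Real.rpow_natCast]
    exact hmaj.mono' hcont.aestronglyMeasurable (Eventually.of_forall hbound)
  refine ⟨hInt, ?_⟩
  -- transfer to the pi type
  set ι : (Fin 2 → ℝ) → EuclideanSpace ℝ (Fin 2) := ⇑(EuclideanSpace.equiv (Fin 2) ℝ).symm with hι
  set ιL : (Fin 2 → ℝ) →L[ℝ] EuclideanSpace ℝ (Fin 2) :=
    (EuclideanSpace.equiv (Fin 2) ℝ).symm.toContinuousLinearMap with hιL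
  set F : (Fin 2 → ℝ) → ℂ := fun y => f₀ (ι y) with hF
  have hφ : MeasurePreserving (⇑(MeasurableEquiv.toLp 2 (Fin 2 → ℝ)))
      (volume : Measure (Fin 2 → ℝ)) volume :=
    (EuclideanSpace.volume_preserving_symm_measurableEquiv_toLp (Fin 2)).symm
  have hIntPi : Integrable F := by
    exact (hφ.integrable_comp_emb
      (MeasurableEquiv.toLp 2 (Fin 2 → ℝ)).measurableEmbedding).mpr hInt
  have hIeq : (∫ y, F y) = ∫ x, f₀ x := by
    exact hφ.integral_comp (MeasurableEquiv.toLp 2 (Fin 2 → ℝ)).measurableEmbedding f₀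
  -- the functions for the divergence theorem
  set g : Fin 2 → EuclideanSpace ℝ (Fin 2) → ℂ :=
    fun i z => (starRingEnd ℂ) (u z) * pd i u z with hg
  have hgdiff : ∀ i z, DifferentiableAt ℝ (g i) z := fun i z =>
    ((hconj z).differentiableAt).mul ((hpd i).differentiable one_ne_zero z)
  have hgcont : ∀ i, Continuous (g i) := fun i =>
    ((continuous_star.comp hu.continuous).mul (hpdc i))
  set f : Fin 2 → (Fin 2 → ℝ) → ℂ := fun i y => g i (ι y) with hf
  set f' : Fin 2 → (Fin 2 → ℝ) → (Fin 2 → ℝ) →L[ℝ] ℂ :=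
    fun i y => (fderiv ℝ (g i) (ι y)).comp ιL with hf'
  have hfder : ∀ i y, HasFDerivAt (f i) (f' i y) y := fun i y =>
    ((hgdiff i (ι y)).hasFDerivAt).comp y
      ((EuclideanSpace.equiv (Fin 2) ℝ).symm.hasFDerivAt)
  have hdivF : ∀ y, (∑ i : Fin 2, f' i y (Pi.single i 1)) = F y := by
    intro y
    have : ∀ i : Fin 2, f' i y (Pi.single i 1)
        = fderiv ℝ (g i) (ι y) (EuclideanSpace.single i 1) := fun i => rfl
    rw [Finset.sum_congr rfl fun i _ => this i]
    exact key (ι y)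
  -- the boxes
  set a : ℕ → (Fin 2 → ℝ) := fun n _ => -(n:ℝ) with ha
  set b : ℕ → (Fin 2 → ℝ) := fun n _ => (n:ℝ) with hb
  set B : ℕ → ℂ := fun n => ∑ i : Fin 2,
      ((∫ x in Icc (a n ∘ i.succAbove) (b n ∘ i.succAbove), f i (i.insertNth (b n i) x)) -
        ∫ x in Icc (a n ∘ i.succAbove) (b n ∘ i.succAbove), f i (i.insertNth (a n i) x)) with hB
  have hdiv : ∀ n : ℕ, (∫ y in Icc (a n) (b n), F y) = B n := by
    intro n
    have hle : a n ≤ b n := fun j => by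
      have : (0:ℝ) ≤ (n:ℝ) := Nat.cast_nonneg n
      simp only [ha, hb]; linarith
    have hres := integral_divergence_of_hasFDerivAt_off_countable (n := 1)
      (a n) (b n) hle (fun y i => f i y)
      (fun y => ContinuousLinearMap.pi fun i => f' i y) ∅ countable_empty
      (continuousOn_pi.2 fun i => ((hgcont i).comp
        (EuclideanSpace.equiv (Fin 2) ℝ).symm.continuous).continuousOn)
      (fun x _ => hasFDerivAt_pi.2 fun i => hfder i x)
      (by
        apply (hIntPi.integrableOn).congr_fun _ measurableSet_Icc
        intro y _
        exact (hdivF y).symm)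
    refine Eq.trans ?_ (hres.trans ?_)
    · refine setIntegral_congr_fun measurableSet_Icc fun x _ => ?_
      exact (hdivF x).symm
    · rfl
  -- coordinate bound
  have hcoord : ∀ (y : EuclideanSpace ℝ (Fin 2)) (j : Fin 2), |y j| ≤ ‖y‖ := by
    intro y j
    rw [EuclideanSpace.norm_eq, ← Real.sqrt_sq_eq_abs]
    apply Real.sqrt_le_sqrt
    calc y j ^ 2 = ‖y j‖ ^ 2 := by rw [Real.norm_eq_abs, sq_abs]
      _ ≤ ∑ i : Fin 2, ‖y i‖ ^ 2 :=
        Finset.single_le_sum (f := fun i => ‖y i‖ ^ 2) (fun i _ => sq_nonneg _)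
          (Finset.mem_univ j)
  -- pointwise bound on faces
  have hface : ∀ (n : ℕ), R' ≤ (n:ℝ) → ∀ (i : Fin 2) (t : ℝ), |t| = (n:ℝ) →
      ∀ x : Fin 1 → ℝ, ‖f i (i.insertNth t x)‖ ≤ C ^ 2 / (n:ℝ) ^ 3 := by
    intro n hn i t ht x
    have hn0 : (0:ℝ) < n := lt_of_lt_of_le hR'0 hn
    set z := ι (i.insertNth t x) with hz
    have hzi : z i = t := by
      have h := Fin.insertNth_apply_same (α := fun _ : Fin 2 => ℝ) i t x
      exact h
    have hnz : (n:ℝ) ≤ ‖z‖ := by rw [← ht, ← hzi]; exact hcoord z i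
    have hz0 : (0:ℝ) < ‖z‖ := lt_of_lt_of_le hn0 hnz
    have hzR : R ≤ ‖z‖ := le_trans (le_trans (le_max_left R 1) hn) hnz
    obtain ⟨hu1, hu2⟩ := hdecay z hzR
    have hpdle : ‖pd i u z‖ ≤ C / ‖z‖ ^ 2 := by
      refine le_trans ?_ hu2
      rw [show ‖pd i u z‖ = Real.sqrt (‖pd i u z‖ ^ 2) from (Real.sqrt_sq (norm_nonneg _)).symm]
      apply Real.sqrt_le_sqrt
      exact Finset.single_le_sum (f := fun j => ‖pd j u z‖ ^ 2) (fun j _ => sq_nonneg _)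
        (Finset.mem_univ i)
    have hfn : ‖f i (i.insertNth t x)‖ = ‖u z‖ * ‖pd i u z‖ := by
      show ‖(starRingEnd ℂ) (u z) * pd i u z‖ = _
      rw [norm_mul, RCLike.norm_conj]
    rw [hfn]
    have e1 : ‖u z‖ ≤ C / n := hu1.trans (by gcongr)
    have e2 : ‖pd i u z‖ ≤ C / (n:ℝ) ^ 2 := hpdle.trans (by gcongr)
    calc ‖u z‖ * ‖pd i u z‖ ≤ (C / n) * (C / (n:ℝ) ^ 2) :=
          mul_le_mul e1 e2 (norm_nonneg _) (by positivity)
      _ = C ^ 2 / (n:ℝ) ^ 3 := by field_simp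
  -- volume of faces
  have hvol : ∀ (n : ℕ) (i : Fin 2),
      (volume (Icc (a n ∘ i.succAbove) (b n ∘ i.succAbove))).toReal = 2 * n := by
    intro n i
    rw [Real.volume_Icc_pi_toReal (fun j => by
      have : (0:ℝ) ≤ (n:ℝ) := Nat.cast_nonneg n
      simp only [ha, hb, Function.comp_apply]; linarith)]
    simp only [ha, hb, Function.comp_apply]
    rw [Fin.prod_univ_one]
    ring
  -- bound on the boundary terms
  have hBnorm : ∀ n : ℕ, R' ≤ (n:ℝ) → ‖B n‖ ≤ 8 * C ^ 2 / (n:ℝ) ^ 2 := by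
    intro n hn
    have hn0 : (0:ℝ) < n := lt_of_lt_of_le hR'0 hn
    have hone : ∀ (i : Fin 2) (t : ℝ), |t| = (n:ℝ) →
        ‖∫ x in Icc (a n ∘ i.succAbove) (b n ∘ i.succAbove), f i (i.insertNth t x)‖
          ≤ (C ^ 2 / (n:ℝ) ^ 3) * (2 * n) := by
      intro i t ht
      have hfin : volume (Icc (a n ∘ i.succAbove) (b n ∘ i.succAbove)) < ⊤ :=
        isCompact_Icc.measure_lt_top
      have := norm_setIntegral_le_of_norm_le_const_ae' hfin
        (ae_of_all _ fun x _ => hface n hn i t ht x)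
      rwa [measureReal_def, hvol n i] at this
    have hbt : |b n (0 : Fin 2)| = (n:ℝ) := by
      simp only [hb]; exact abs_of_nonneg (Nat.cast_nonneg n)
    have hat : |a n (0 : Fin 2)| = (n:ℝ) := by
      simp only [ha]; rw [abs_neg]; exact abs_of_nonneg (Nat.cast_nonneg n)
    calc ‖B n‖ ≤ ∑ i : Fin 2,
          ‖(∫ x in Icc (a n ∘ i.succAbove) (b n ∘ i.succAbove), f i (i.insertNth (b n i) x)) -
            ∫ x in Icc (a n ∘ i.succAbove) (b n ∘ i.succAbove), f i (i.insertNth (a n i) x)‖ :=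
        norm_sum_le _ _
      _ ≤ ∑ _i : Fin 2, (2 * ((C ^ 2 / (n:ℝ) ^ 3) * (2 * n))) := by
          apply Finset.sum_le_sum
          intro i _
          refine (norm_sub_le _ _).trans ?_
          have h1 := hone i (b n i) (by simpa [hb] using hbt)
          have h2 := hone i (a n i) (by simpa [ha] using hat)
          linarith
      _ = 8 * C ^ 2 / (n:ℝ) ^ 2 := by
          rw [Fin.sum_univ_two]
          field_simp
          ring
  -- the boundary terms tend to zero
  have hBtend : Tendsto B atTop (𝓝 (0:ℂ)) := by
    have hb1 : ∀ᶠ n : ℕ in atTop, ‖B n‖ ≤ 8 * C ^ 2 / (n:ℝ) := by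
      filter_upwards [eventually_ge_atTop ⌈R'⌉₊] with n hn
      have hn' : R' ≤ (n:ℝ) := le_trans (Nat.le_ceil R') (by exact_mod_cast hn)
      have h1n : (1:ℝ) ≤ (n:ℝ) := le_trans hR'1 hn'
      refine (hBnorm n hn').trans ?_
      have h2 : (n:ℝ) ≤ (n:ℝ) ^ 2 := by nlinarith
      exact div_le_div_of_nonneg_left (by positivity) (by linarith) h2
    exact squeeze_zero_norm' hb1 (tendsto_const_div_atTop_nhds_zero_nat _)
  -- monotone convergence of box integrals
  have hmono : Monotone (fun n : ℕ => Icc (a n) (b n)) := by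
    intro m n hmn
    apply Set.Icc_subset_Icc
    · intro j
      simp only [ha]
      exact neg_le_neg (Nat.cast_le.2 hmn)
    · intro j
      simp only [hb]
      exact_mod_cast hmn
  have hUnion : (⋃ n : ℕ, Icc (a n) (b n)) = univ := by
    ext y
    simp only [mem_iUnion, mem_univ, iff_true]
    obtain ⟨n, hn⟩ := exists_nat_ge ‖y‖
    refine ⟨n, ?_, ?_⟩
    · intro j
      have := norm_le_pi_norm y j
      rw [Real.norm_eq_abs] at this
      have := abs_le.mp (this.trans hn)
      simpa [ha] using this.1
    · intro j
      have := norm_le_pi_norm y j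
      rw [Real.norm_eq_abs] at this
      have := abs_le.mp (this.trans hn)
      simpa [hb] using this.2
  have hT1 : Tendsto (fun n : ℕ => ∫ y in Icc (a n) (b n), F y) atTop (𝓝 (∫ y, F y)) := by
    have := tendsto_setIntegral_of_monotone (fun n : ℕ => measurableSet_Icc) hmono
      (by rw [hUnion]; exact hIntPi.integrableOn)
    rwa [hUnion, setIntegral_univ] at this
  have hT1' : Tendsto B atTop (𝓝 (∫ y, F y)) := by
    have : (fun n : ℕ => ∫ y in Icc (a n) (b n), F y) = B := funext hdiv
    rwa [this] at hT1
  have hF0 : (∫ y, F y) = 0 := tendsto_nhds_unique hT1' hBtend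
  rw [← hIeq]
  exact hF0
end

section
/- Suppose V : ℝ² → ℂ is continuous, vanishes outside the closed ball of radius R centered at the origin, and satisfies Re V(x) ≥ 0 for all x. Suppose u : ℝ² → ℂ is twice continuously differentiable and satisfies Δu = V·u on ℝ², and there is a constant C such that |u(x)| ≤ C/‖x‖ and ‖∇u(x)‖ ≤ C/‖x‖² for all x with ‖x‖ ≥ R. Then u is identically zero. -/
open MeasureTheory
set_option maxHeartbeats 2000000

noncomputable def iso : (ℝ × ℝ) ≃L[ℝ] EuclideanSpace ℝ (Fin 2) :=
  (ContinuousLinearEquiv.finTwoArrow ℝ ℝ).symm.trans (EuclideanSpace.equiv (Fin 2) ℝ).symm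

lemma iso_apply (p : ℝ × ℝ) (j : Fin 2) : iso p j = ![p.1, p.2] j := rfl

lemma iso_e0 : iso (1,0) = EuclideanSpace.single 0 1 := by
  ext j; rw [iso_apply]; fin_cases j <;> simp

lemma iso_e1 : iso (0,1) = EuclideanSpace.single 1 1 := by
  ext j; rw [iso_apply]; fin_cases j <;> simp

lemma norm_iso (p : ℝ × ℝ) : ‖iso p‖ = Real.sqrt (p.1^2 + p.2^2) := by
  rw [EuclideanSpace.norm_eq]
  congr 1
  rw [Fin.sum_univ_two, iso_apply, iso_apply]
  simp [sq_abs]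

lemma fderiv_comp_iso (f : EuclideanSpace ℝ (Fin 2) → ℂ) (hf : Differentiable ℝ f)
    (p : ℝ × ℝ) (v : ℝ × ℝ) :
    fderiv ℝ (fun q => f (iso q)) p v = fderiv ℝ f (iso p) (iso v) := by
  have : fderiv ℝ (f ∘ iso) p = (fderiv ℝ f (iso p)).comp (fderiv ℝ (⇑iso) p) :=
    fderiv_comp p (hf _) iso.differentiableAt
  rw [iso.fderiv] at this
  show fderiv ℝ (f ∘ ⇑iso) p v = _
  rw [this]; rfl

noncomputable def cCLM : ℂ →L[ℝ] ℂ := Complex.conjCLE.toContinuousLinearMap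

lemma re_key (w z q0 q1 d0 d1 : ℂ) (h : q0 + q1 = w * z) :
    ((starRingEnd ℂ) z * q0 + d0 * (starRingEnd ℂ) d0).re
      + ((starRingEnd ℂ) z * q1 + d1 * (starRingEnd ℂ) d1).re
    = ‖d0‖^2 + ‖d1‖^2 + w.re * ‖z‖^2 := by
  have h1 : q1 = w*z - q0 := by linear_combination h
  subst h1
  simp only [Complex.add_re, Complex.mul_re, Complex.sub_re, Complex.sub_im, Complex.mul_im,
    Complex.conj_re, Complex.conj_im, Complex.sq_norm, Complex.normSq_apply]
  ring

/-- For a compactly supported continuous potential with `Re V ≥ 0` on `ℝ²`, any solution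
of `Δu = V u` decaying like `O(‖x‖⁻¹)` (with gradient `O(‖x‖⁻²)`) vanishes identically. -/
theorem no_p_resonance_re_nonneg (R : ℝ) (V u : EuclideanSpace ℝ (Fin 2) → ℂ)
    (hV : Continuous V) (hVsupp : ∀ x : EuclideanSpace ℝ (Fin 2), R < ‖x‖ → V x = 0)
    (hVre : ∀ x, 0 ≤ (V x).re)
    (hu : ContDiff ℝ 2 u) (huV : ∀ x, lap u x = V x * u x)
    (C : ℝ)
    (hdecay : ∀ x : EuclideanSpace ℝ (Fin 2), R ≤ ‖x‖ →
      ‖u x‖ ≤ C / ‖x‖ ∧ Real.sqrt (∑ i : Fin 2, ‖pd i u x‖ ^ 2) ≤ C / ‖x‖ ^ 2) :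
    ∀ x, u x = 0 := by
  have hud : Differentiable ℝ u := hu.differentiable (by norm_num)
  have hm1 : (1:ℝ) ≤ max R 1 := le_max_right R 1
  have hm0 : (0:ℝ) < max R 1 := lt_of_lt_of_le one_pos hm1
  have hmR : R ≤ max R 1 := le_max_left R 1
  -- norm of a point (t, 0)
  have hnormt : ∀ t : ℝ, 0 ≤ t → ‖iso (t, 0)‖ = t := by
    intro t ht
    rw [norm_iso]
    simp [Real.sqrt_sq ht]
  have hC : 0 ≤ C := by
    have h1 := (hdecay (iso (max R 1, 0)) (by rw [hnormt _ hm0.le]; exact hmR)).1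
    rw [hnormt _ hm0.le] at h1
    have h0 : 0 ≤ C / max R 1 := le_trans (norm_nonneg _) h1
    calc C = C / max R 1 * max R 1 := (div_mul_cancel₀ C hm0.ne').symm
    _ ≥ 0 := mul_nonneg h0 hm0.le
  -- transfer to ℝ × ℝ
  set U : (ℝ × ℝ) → ℂ := fun p => u (iso p) with hUdef
  set W : (ℝ × ℝ) → ℂ := fun p => V (iso p) with hWdef
  have hUc : ContDiff ℝ 2 U := hu.comp iso.contDiff
  have hUd : Differentiable ℝ U := hUc.differentiable (by norm_num)
  set P0 : (ℝ × ℝ) → ℂ := fun p => fderiv ℝ U p (1,0) with hP0def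
  set P1 : (ℝ × ℝ) → ℂ := fun p => fderiv ℝ U p (0,1) with hP1def
  have hP0c : ContDiff ℝ 1 P0 := (hUc.fderiv_right (by norm_num)).clm_apply contDiff_const
  have hP1c : ContDiff ℝ 1 P1 := (hUc.fderiv_right (by norm_num)).clm_apply contDiff_const
  have hpdc : ∀ i : Fin 2, ContDiff ℝ 1 (pd i u) := by
    intro i
    have : ContDiff ℝ 1 (fun x => fderiv ℝ u x (EuclideanSpace.single i 1)) :=
      (hu.fderiv_right (by norm_num)).clm_apply contDiff_const
    exact this
  have hP0u : ∀ p, P0 p = pd 0 u (iso p) := by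
    intro p
    rw [hP0def]
    show fderiv ℝ (fun q => u (iso q)) p (1,0) = _
    rw [fderiv_comp_iso u hud p (1,0), iso_e0]
    rfl
  have hP1u : ∀ p, P1 p = pd 1 u (iso p) := by
    intro p
    rw [hP1def]
    show fderiv ℝ (fun q => u (iso q)) p (0,1) = _
    rw [fderiv_comp_iso u hud p (0,1), iso_e1]
    rfl
  have hQ : ∀ p, fderiv ℝ P0 p (1,0) + fderiv ℝ P1 p (0,1) = W p * U p := by
    intro p
    have e0 : P0 = fun q => pd 0 u (iso q) := funext hP0u
    have e1 : P1 = fun q => pd 1 u (iso q) := funext hP1u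
    rw [e0, e1, fderiv_comp_iso _ ((hpdc 0).differentiable one_ne_zero) p,
      fderiv_comp_iso _ ((hpdc 1).differentiable one_ne_zero) p, iso_e0, iso_e1]
    have h := huV (iso p)
    rw [lap, Fin.sum_univ_two] at h
    exact h
  -- the vector field and its divergence
  set F1 : (ℝ × ℝ) → ℝ := fun p => ((starRingEnd ℂ) (U p) * P0 p).re with hF1def
  set F2 : (ℝ × ℝ) → ℝ := fun p => ((starRingEnd ℂ) (U p) * P1 p).re with hF2def
  set f' : (ℝ × ℝ) → (ℝ × ℝ) →L[ℝ] ℝ := fun p =>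
    Complex.reCLM.comp ((starRingEnd ℂ) (U p) • fderiv ℝ P0 p + P0 p • (cCLM.comp (fderiv ℝ U p)))
    with hf'def
  set g' : (ℝ × ℝ) → (ℝ × ℝ) →L[ℝ] ℝ := fun p =>
    Complex.reCLM.comp ((starRingEnd ℂ) (U p) • fderiv ℝ P1 p + P1 p • (cCLM.comp (fderiv ℝ U p)))
    with hg'def
  have hconjd : ∀ p : ℝ × ℝ, HasFDerivAt (fun q => (starRingEnd ℂ) (U q))
      (cCLM.comp (fderiv ℝ U p)) p := fun p => cCLM.hasFDerivAt.comp p (hUd p).hasFDerivAt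
  have hF1d : ∀ p : ℝ × ℝ, HasFDerivAt F1 (f' p) p := fun p =>
    Complex.reCLM.hasFDerivAt.comp p
      ((hconjd p).mul ((hP0c.differentiable one_ne_zero p).hasFDerivAt))
  have hF2d : ∀ p : ℝ × ℝ, HasFDerivAt F2 (g' p) p := fun p =>
    Complex.reCLM.hasFDerivAt.comp p
      ((hconjd p).mul ((hP1c.differentiable one_ne_zero p).hasFDerivAt))
  set dv : (ℝ × ℝ) → ℝ := fun p => ‖P0 p‖^2 + ‖P1 p‖^2 + (W p).re * ‖U p‖^2 with hdvdef
  have hdveq : ∀ p : ℝ × ℝ, f' p (1,0) + g' p (0,1) = dv p := by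
    intro p
    exact re_key (W p) (U p) (fderiv ℝ P0 p (1,0)) (fderiv ℝ P1 p (0,1)) (P0 p) (P1 p) (hQ p)
  have hdvc : Continuous dv :=
    ((hP0c.continuous.norm.pow 2).add (hP1c.continuous.norm.pow 2)).add
      ((Complex.continuous_re.comp (hV.comp iso.continuous)).mul (hUc.continuous.norm.pow 2))
  have hdvnn : ∀ p, 0 ≤ dv p := by
    intro p
    have h := hVre (iso p)
    have : 0 ≤ (W p).re * ‖U p‖^2 := mul_nonneg h (by positivity)
    have h2 : (0:ℝ) ≤ ‖P0 p‖^2 := by positivity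
    have h3 : (0:ℝ) ≤ ‖P1 p‖^2 := by positivity
    rw [hdvdef]; dsimp only; linarith
  -- pointwise bound on the boundary field
  have hFb : ∀ r : ℝ, max R 1 ≤ r → ∀ p : ℝ × ℝ, r ≤ ‖iso p‖ →
      ‖F1 p‖ ≤ C^2/r^3 ∧ ‖F2 p‖ ≤ C^2/r^3 := by
    intro r hr p hp
    have hr0 : (0:ℝ) < r := lt_of_lt_of_le hm0 hr
    have hqR : R ≤ ‖iso p‖ := le_trans (le_trans hmR hr) hp
    obtain ⟨h1, h2⟩ := hdecay (iso p) hqR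
    have hq0 : (0:ℝ) < ‖iso p‖ := lt_of_lt_of_le hr0 hp
    have hU1 : ‖U p‖ ≤ C / r := le_trans h1 (div_le_div_of_nonneg_left hC hr0 hp)
    have hpd2 : ∀ i : Fin 2, ‖pd i u (iso p)‖ ≤ C / r^2 := by
      intro i
      have hle : ‖pd i u (iso p)‖ ≤ Real.sqrt (∑ j : Fin 2, ‖pd j u (iso p)‖ ^ 2) := by
        rw [show ‖pd i u (iso p)‖ = Real.sqrt (‖pd i u (iso p)‖^2) from
          (Real.sqrt_sq (norm_nonneg _)).symm]
        apply Real.sqrt_le_sqrt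
        exact Finset.single_le_sum (f := fun j => ‖pd j u (iso p)‖^2)
          (fun j _ => by positivity) (Finset.mem_univ i)
      refine le_trans (le_trans hle h2) (div_le_div_of_nonneg_left hC (by positivity) ?_)
      exact pow_le_pow_left₀ hr0.le hp 2
    have key : ∀ z : ℂ, ‖z‖ ≤ C / r^2 → ‖((starRingEnd ℂ) (U p) * z).re‖ ≤ C^2/r^3 := by
      intro z hz
      have : ‖((starRingEnd ℂ) (U p) * z).re‖ ≤ ‖(starRingEnd ℂ) (U p) * z‖ := by
        rw [Real.norm_eq_abs]
        exact Complex.abs_re_le_norm _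
      refine le_trans this ?_
      rw [norm_mul, RCLike.norm_conj]
      calc ‖U p‖ * ‖z‖ ≤ (C/r) * (C/r^2) :=
            mul_le_mul hU1 hz (norm_nonneg _) (div_nonneg hC hr0.le)
        _ = C^2/r^3 := by ring
    exact ⟨by rw [hF1def]; exact key _ (by rw [hP0u]; exact hpd2 0),
           by rw [hF2def]; exact key _ (by rw [hP1u]; exact hpd2 1)⟩
  -- divergence theorem and decay of the total integral
  have hIbound : ∀ r : ℝ, max R 1 ≤ r →
      (∫ p in Set.Icc ((-r,-r) : ℝ × ℝ) (r,r), dv p) ≤ 8*C^2/r^2 := by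
    intro r hr
    have hr1 : (1:ℝ) ≤ r := le_trans hm1 hr
    have hr0 : (0:ℝ) < r := lt_of_lt_of_le one_pos hr1
    have hle : ((-r,-r) : ℝ × ℝ) ≤ (r,r) := ⟨by dsimp; linarith, by dsimp; linarith⟩
    have Hi : IntegrableOn (fun p : ℝ × ℝ => f' p (1,0) + g' p (0,1))
        (Set.Icc ((-r,-r) : ℝ × ℝ) (r,r)) := by
      have : (fun p : ℝ × ℝ => f' p (1,0) + g' p (0,1)) = dv := funext hdveq
      rw [this]
      exact (hdvc.continuousOn).integrableOn_compact isCompact_Icc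
    have hF1c : Continuous F1 :=
      Complex.continuous_re.comp ((Complex.continuous_conj.comp hUc.continuous).mul
        hP0c.continuous)
    have hF2c : Continuous F2 :=
      Complex.continuous_re.comp ((Complex.continuous_conj.comp hUc.continuous).mul
        hP1c.continuous)
    have hdiv' :
        (∫ p in Set.Icc ((-r,-r) : ℝ × ℝ) (r,r), (f' p (1, 0) + g' p (0, 1))) =
          (((∫ x in (-r)..r, F2 (x, r)) - ∫ x in (-r)..r, F2 (x, -r)) +
              ∫ y in (-r)..r, F1 (r, y)) -
            ∫ y in (-r)..r, F1 (-r, y) :=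
      integral_divergence_prod_Icc_of_hasFDerivAt_off_countable_of_le F1 F2 f' g'
        (-r,-r) (r,r) hle ∅ Set.countable_empty
        hF1c.continuousOn hF2c.continuousOn
        (fun p _ => hF1d p) (fun p _ => hF2d p) Hi
    have hdveq' : (fun p : ℝ × ℝ => f' p (1, 0) + g' p (0, 1)) = dv := funext hdveq
    rw [hdveq'] at hdiv'
    -- boundary estimates
    have hnorm2 : ∀ s t : ℝ, r ≤ |t| → r ≤ ‖iso (s, t)‖ := by
      intro s t ht
      rw [norm_iso]
      have : r = Real.sqrt (r^2) := (Real.sqrt_sq hr0.le).symm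
      rw [this]
      apply Real.sqrt_le_sqrt
      have h2 : r^2 ≤ t^2 := by
        calc r^2 ≤ |t|^2 := pow_le_pow_left₀ hr0.le ht 2
        _ = t^2 := sq_abs t
      nlinarith [sq_nonneg s]
    have hnorm1 : ∀ s t : ℝ, r ≤ |s| → r ≤ ‖iso (s, t)‖ := by
      intro s t hs
      rw [norm_iso]
      have : r = Real.sqrt (r^2) := (Real.sqrt_sq hr0.le).symm
      rw [this]
      apply Real.sqrt_le_sqrt
      have h2 : r^2 ≤ s^2 := by
        calc r^2 ≤ |s|^2 := pow_le_pow_left₀ hr0.le hs 2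
        _ = s^2 := sq_abs s
      nlinarith [sq_nonneg t]
    have habsr : r ≤ |r| := le_abs_self r
    have habsnr : r ≤ |(-r)| := by rw [abs_neg]; exact le_abs_self r
    have hB1 : ‖∫ x in (-r)..r, F2 (x, r)‖ ≤ C^2/r^3 * |r - (-r)| :=
      intervalIntegral.norm_integral_le_of_norm_le_const
        (fun x _ => (hFb r hr (x, r) (hnorm2 x r habsr)).2)
    have hB2 : ‖∫ x in (-r)..r, F2 (x, -r)‖ ≤ C^2/r^3 * |r - (-r)| :=
      intervalIntegral.norm_integral_le_of_norm_le_const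
        (fun x _ => (hFb r hr (x, -r) (hnorm2 x (-r) habsnr)).2)
    have hB3 : ‖∫ y in (-r)..r, F1 (r, y)‖ ≤ C^2/r^3 * |r - (-r)| :=
      intervalIntegral.norm_integral_le_of_norm_le_const
        (fun y _ => (hFb r hr (r, y) (hnorm1 r y habsr)).1)
    have hB4 : ‖∫ y in (-r)..r, F1 (-r, y)‖ ≤ C^2/r^3 * |r - (-r)| :=
      intervalIntegral.norm_integral_le_of_norm_le_const
        (fun y _ => (hFb r hr (-r, y) (hnorm1 (-r) y habsnr)).1)
    have habs2r : |r - (-r)| = 2*r := by rw [sub_neg_eq_add]; rw [abs_of_pos (by linarith)]; ring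
    rw [habs2r] at hB1 hB2 hB3 hB4
    have hM : C^2/r^3 * (2*r) = 2*C^2/r^2 := by field_simp
    rw [hM] at hB1 hB2 hB3 hB4
    rw [Real.norm_eq_abs, abs_le] at hB1 hB2 hB3 hB4
    rw [hdiv']
    have h8 : (8:ℝ)*C^2/r^2 = 2*C^2/r^2 + 2*C^2/r^2 + 2*C^2/r^2 + 2*C^2/r^2 := by ring
    rw [h8]
    linarith [hB1.1, hB1.2, hB2.1, hB2.2, hB3.1, hB3.2, hB4.1, hB4.2]
  -- the divergence vanishes identically
  have hdvzero : ∀ p, dv p = 0 := by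
    intro p0
    refine le_antisymm ?_ (hdvnn p0)
    clear_value dv
    by_contra hpos
    push_neg at hpos
    obtain ⟨ε, hε, hball⟩ := Metric.continuousAt_iff.mp hdvc.continuousAt (dv p0 / 2)
      (by linarith)
    set a : ℝ × ℝ := (p0.1 - ε/2, p0.2 - ε/2) with hadef
    set b : ℝ × ℝ := (p0.1 + ε/2, p0.2 + ε/2) with hbdef
    have hBlow : ∀ q ∈ Set.Icc a b, dv p0 / 2 ≤ dv q := by
      intro q hq
      rw [Set.mem_Icc, Prod.le_def, Prod.le_def] at hq
      obtain ⟨⟨h1, h2⟩, ⟨h3, h4⟩⟩ := hq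
      have ha1 : a.1 = p0.1 - ε/2 := rfl
      have ha2 : a.2 = p0.2 - ε/2 := rfl
      have hb1 : b.1 = p0.1 + ε/2 := rfl
      have hb2 : b.2 = p0.2 + ε/2 := rfl
      rw [ha1] at h1; rw [ha2] at h2; rw [hb1] at h3; rw [hb2] at h4
      have hd : dist q p0 < ε := by
        rw [Prod.dist_eq]
        apply max_lt <;> rw [Real.dist_eq, abs_lt] <;> constructor <;> linarith
      have h5 := hball hd
      rw [Real.dist_eq, abs_lt] at h5
      linarith [h5.1]
    have hvol : (volume (Set.Icc a b)).toReal = ε * ε := by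
      rw [Set.Icc_prod_eq, MeasureTheory.Measure.volume_eq_prod,
        MeasureTheory.Measure.prod_prod, Real.volume_Icc, Real.volume_Icc]
      have e1 : b.1 - a.1 = ε := by rw [hadef, hbdef]; dsimp; ring
      have e2 : b.2 - a.2 = ε := by rw [hadef, hbdef]; dsimp; ring
      rw [e1, e2, ← ENNReal.ofReal_mul hε.le, ENNReal.toReal_ofReal (by positivity)]
    set M : ℝ := max (max R 1) (max (|p0.1| + ε/2) (max (|p0.2| + ε/2)
      (16*C^2/(dv p0 * (ε*ε))))) with hMdef
    set r : ℝ := 1 + M with hrdef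
    have hM1 : max R 1 ≤ M := le_max_left _ _
    have hM2 : |p0.1| + ε/2 ≤ M := le_trans (le_max_left _ _) (le_max_right _ _)
    have hM3 : |p0.2| + ε/2 ≤ M :=
      le_trans (le_trans (le_max_left _ _) (le_max_right _ _)) (le_max_right _ _)
    have hM4 : 16*C^2/(dv p0 * (ε*ε)) ≤ M :=
      le_trans (le_trans (le_max_right _ _) (le_max_right _ _)) (le_max_right _ _)
    have hrbig : max R 1 ≤ r := by rw [hrdef]; linarith
    have hr1 : (1:ℝ) ≤ r := le_trans hm1 hrbig
    have hr0 : (0:ℝ) < r := lt_of_lt_of_le one_pos hr1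
    have hsub : Set.Icc a b ⊆ Set.Icc ((-r,-r) : ℝ × ℝ) (r,r) := by
      intro q hq
      rw [Set.mem_Icc, Prod.le_def, Prod.le_def] at hq
      obtain ⟨⟨h1, h2⟩, ⟨h3, h4⟩⟩ := hq
      have ha1 : a.1 = p0.1 - ε/2 := rfl
      have ha2 : a.2 = p0.2 - ε/2 := rfl
      have hb1 : b.1 = p0.1 + ε/2 := rfl
      have hb2 : b.2 = p0.2 + ε/2 := rfl
      rw [ha1] at h1; rw [ha2] at h2; rw [hb1] at h3; rw [hb2] at h4
      have hp1a := neg_abs_le p0.1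
      have hp1b := le_abs_self p0.1
      have hp2a := neg_abs_le p0.2
      have hp2b := le_abs_self p0.2
      rw [Set.mem_Icc, Prod.le_def, Prod.le_def]
      refine ⟨⟨?_, ?_⟩, ⟨?_, ?_⟩⟩ <;> dsimp <;> rw [hrdef] <;> linarith
    have hint : IntegrableOn dv (Set.Icc ((-r,-r) : ℝ × ℝ) (r,r)) :=
      hdvc.continuousOn.integrableOn_compact isCompact_Icc
    have hlow : dv p0 / 2 * (volume (Set.Icc a b)).toReal ≤ ∫ p in Set.Icc a b, dv p :=
      setIntegral_ge_of_const_le_real measurableSet_Icc (isCompact_Icc.measure_lt_top).ne hBlow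
        (hdvc.continuousOn.integrableOn_compact isCompact_Icc)
    have hmono : (∫ p in Set.Icc a b, dv p) ≤
        ∫ p in Set.Icc ((-r,-r) : ℝ × ℝ) (r,r), dv p :=
      setIntegral_mono_set hint (ae_of_all _ hdvnn) (HasSubset.Subset.eventuallyLE hsub)
    have hup := hIbound r hrbig
    rw [hvol] at hlow
    have hr2 : r ≤ r^2 := by nlinarith
    have h81 : 8*C^2/r^2 ≤ 8*C^2/r := div_le_div_of_nonneg_left (by positivity) hr0 hr2
    have hrgt : 16*C^2/(dv p0 * (ε*ε)) < r := by rw [hrdef]; linarith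
    have hde : (0:ℝ) < dv p0 * (ε*ε) := by positivity
    rw [div_lt_iff₀ hde] at hrgt
    have hfin : 8*C^2/r < dv p0 / 2 * (ε*ε) := by
      rw [div_lt_iff₀ hr0]
      nlinarith
    linarith
  -- hence the gradient of U vanishes
  have hPzero : ∀ p, P0 p = 0 ∧ P1 p = 0 := by
    intro p
    have h := hdvzero p
    rw [hdvdef] at h
    dsimp only at h
    have h3 : 0 ≤ (W p).re * ‖U p‖^2 := mul_nonneg (hVre (iso p)) (by positivity)
    have h1 : ‖P0 p‖^2 = 0 := by nlinarith [sq_nonneg ‖P0 p‖, sq_nonneg ‖P1 p‖]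
    have h2 : ‖P1 p‖^2 = 0 := by nlinarith [sq_nonneg ‖P0 p‖, sq_nonneg ‖P1 p‖]
    exact ⟨norm_eq_zero.mp (pow_eq_zero_iff two_ne_zero |>.mp h1),
      norm_eq_zero.mp (pow_eq_zero_iff two_ne_zero |>.mp h2)⟩
  have hfz : ∀ p, fderiv ℝ U p = 0 := by
    intro p
    apply ContinuousLinearMap.ext
    intro v
    obtain ⟨h0, h1⟩ := hPzero p
    have e0 : fderiv ℝ U p (1,0) = 0 := h0
    have e1 : fderiv ℝ U p (0,1) = 0 := h1
    have hv : v = v.1 • ((1:ℝ),(0:ℝ)) + v.2 • ((0:ℝ),(1:ℝ)) := by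
      ext <;> simp
    rw [hv, map_add, ContinuousLinearMap.map_smul, ContinuousLinearMap.map_smul, e0, e1]
    simp
  have hUconst := is_const_of_fderiv_eq_zero hUd hfz
  -- conclusion
  intro x
  have hx : ∀ t : ℝ, u x = u (iso (t, 0)) := by
    intro t
    have : u x = U (iso.symm x) := by rw [hUdef]; dsimp only; rw [iso.apply_symm_apply]
    rw [this, hUconst (iso.symm x) (t, 0)]
  have hsmall : ∀ ε : ℝ, 0 < ε → ‖u x‖ ≤ ε := by
    intro ε hε
    set t : ℝ := max (max R 1) (C/ε) with htdef
    have ht1 : 0 < t := lt_of_lt_of_le hm0 (le_max_left _ _)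
    have htn : ‖iso (t,0)‖ = t := hnormt t ht1.le
    have h1 := (hdecay (iso (t,0)) (by rw [htn]; exact le_trans hmR (le_max_left _ _))).1
    rw [htn] at h1
    have h2 : C / t ≤ ε := by
      rw [div_le_iff₀ ht1]
      have h3 : C/ε ≤ t := le_max_right _ _
      rw [div_le_iff₀ hε] at h3
      nlinarith
    calc ‖u x‖ = ‖u (iso (t,0))‖ := by rw [hx t]
    _ ≤ C / t := h1
    _ ≤ ε := h2
  by_contra hne
  have hpos : 0 < ‖u x‖ := norm_pos_iff.mpr hne
  have := hsmall (‖u x‖/2) (by linarith)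
  linarith
end

section
/- Suppose V : ℝ² → ℂ is continuous, vanishes outside the closed ball of radius R centered at the origin, and satisfies Im V(x) ≥ 0 for all x. Suppose u : ℝ² → ℂ is twice continuously differentiable and satisfies Δu = V·u on ℝ², and there is a constant C such that |u(x)| ≤ C/‖x‖ and ‖∇u(x)‖ ≤ C/‖x‖² for all x with ‖x‖ ≥ R. Then Im V(x) · |u(x)|² = 0 for every x ∈ ℝ². -/
open MeasureTheory

local notation "E2" => EuclideanSpace ℝ (Fin 2)

lemma pd_contDiff {u : E2 → ℂ} (hu : ContDiff ℝ 2 u) (i : Fin 2) :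
    ContDiff ℝ 1 (pd i u) := by
  have h : ContDiff ℝ 1 (fun x => fderiv ℝ u x) := hu.fderiv_right (by norm_num)
  exact h.clm_apply contDiff_const

noncomputable def Phi (u : E2 → ℂ) (i : Fin 2) (x : E2) : ℝ :=
  ((starRingEnd ℂ) (u x) * pd i u x).im

noncomputable def Phi' (u : E2 → ℂ) (i : Fin 2) (x : E2) : E2 →L[ℝ] ℝ :=
  Complex.imCLM.comp ((starRingEnd ℂ) (u x) • fderiv ℝ (pd i u) x
    + pd i u x • ((Complex.conjCLE.toContinuousLinearMap).comp (fderiv ℝ u x)))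

lemma hasFDerivAt_Phi {u : E2 → ℂ} (hu : ContDiff ℝ 2 u) (i : Fin 2) (x : E2) :
    HasFDerivAt (Phi u i) (Phi' u i x) x := by
  have hud : HasFDerivAt u (fderiv ℝ u x) x :=
    (hu.differentiable (by norm_num) x).hasFDerivAt
  have hconj : HasFDerivAt (fun z => (starRingEnd ℂ) (u z))
      ((Complex.conjCLE.toContinuousLinearMap).comp (fderiv ℝ u x)) x :=
    (Complex.conjCLE.toContinuousLinearMap.hasFDerivAt).comp x hud
  have hpd : HasFDerivAt (pd i u) (fderiv ℝ (pd i u) x) x :=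
    (((pd_contDiff hu i).differentiable one_ne_zero) x).hasFDerivAt
  have hmul := hconj.mul hpd
  exact (Complex.imCLM.hasFDerivAt).comp x hmul

lemma Phi'_sum {u V : E2 → ℂ} (huV : ∀ x, lap u x = V x * u x) (x : E2) :
    ∑ i, Phi' u i x (EuclideanSpace.single i 1) = (V x).im * ‖u x‖ ^ 2 := by
  have h1 : ∀ i : Fin 2, Phi' u i x (EuclideanSpace.single i 1)
      = ((starRingEnd ℂ) (u x) * fderiv ℝ (pd i u) x (EuclideanSpace.single i 1)).im := by
    intro i
    simp only [Phi', ContinuousLinearMap.comp_apply, ContinuousLinearMap.add_apply,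
      ContinuousLinearMap.smul_apply, Complex.imCLM_apply, smul_eq_mul,
      ContinuousLinearEquiv.coe_coe, Complex.conjCLE_apply, Complex.add_im]
    have : (pd i u x * (starRingEnd ℂ) (fderiv ℝ u x (EuclideanSpace.single i 1))).im = 0 := by
      rw [show fderiv ℝ u x (EuclideanSpace.single i 1) = pd i u x from rfl,
        Complex.mul_conj]
      simp
    rw [this, add_zero]
  rw [Finset.sum_congr rfl (fun i _ => h1 i), ← Complex.im_sum]
  rw [← Finset.mul_sum]
  have hl : ∑ i : Fin 2, fderiv ℝ (pd i u) x (EuclideanSpace.single i 1) = lap u x := rfl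
  rw [hl, huV]
  have h2 : (starRingEnd ℂ) (u x) * (V x * u x) = V x * ((Complex.normSq (u x) : ℝ) : ℂ) := by
    rw [Complex.normSq_eq_conj_mul_self]
    ring
  rw [h2, Complex.mul_im]
  have : Complex.normSq (u x) = ‖u x‖ ^ 2 := by
    rw [Complex.normSq_eq_norm_sq]
  rw [this]
  simp [← Complex.ofReal_pow]

open Set in
lemma key_bound (R : ℝ) (V u : EuclideanSpace ℝ (Fin 2) → ℂ) (hV : Continuous V)
    (hVsupp : ∀ x : EuclideanSpace ℝ (Fin 2), R < ‖x‖ → V x = 0)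
    (hu : ContDiff ℝ 2 u) (huV : ∀ x, lap u x = V x * u x)
    (C : ℝ) (hC : 0 ≤ C)
    (hdecay : ∀ x : EuclideanSpace ℝ (Fin 2), R ≤ ‖x‖ →
      ‖u x‖ ≤ C / ‖x‖ ∧ Real.sqrt (∑ i : Fin 2, ‖pd i u x‖ ^ 2) ≤ C / ‖x‖ ^ 2)
    (r : ℝ) (hrR : R ≤ r) (hr1 : 1 ≤ r) :
    (∫ x, (V x).im * ‖u x‖ ^ 2) ≤ 8 * C ^ 2 / r ^ 2 := by
  have hr0 : (0:ℝ) < r := lt_of_lt_of_le one_pos hr1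
  set ψL : (Fin 2 → ℝ) ≃L[ℝ] EuclideanSpace ℝ (Fin 2) :=
    (PiLp.continuousLinearEquiv 2 ℝ (fun _ : Fin 2 => ℝ)).symm with hψL
  set a : Fin 2 → ℝ := fun _ => -r with ha
  set b : Fin 2 → ℝ := fun _ => r with hb
  have hle : a ≤ b := fun i => by simp [ha, hb]; linarith
  set g : EuclideanSpace ℝ (Fin 2) → ℝ := fun x => (V x).im * ‖u x‖ ^ 2 with hg
  have hgc : Continuous g := (Complex.continuous_im.comp hV).mul
    ((hu.continuous.norm).pow 2)
  have hnorm_ge : ∀ (y : Fin 2 → ℝ) (i : Fin 2), |y i| ≤ ‖ψL y‖ := by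
    intro y i
    rw [EuclideanSpace.norm_eq]
    have h1 : (ψL y : EuclideanSpace ℝ (Fin 2)) i = y i := rfl
    calc |y i| = Real.sqrt (‖y i‖ ^ 2) := by
          rw [Real.sqrt_sq_eq_abs]; simp [Real.norm_eq_abs]
      _ ≤ _ := by
          apply Real.sqrt_le_sqrt
          have := Finset.single_le_sum (f := fun j => ‖(ψL y) j‖ ^ 2)
            (fun j _ => by positivity) (Finset.mem_univ i)
          simpa [h1] using this
  set f : Fin 2 → (Fin 2 → ℝ) → ℝ := fun i y => Phi u i (ψL y) with hf
  set f' : Fin 2 → (Fin 2 → ℝ) → (Fin 2 → ℝ) →L[ℝ] ℝ :=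
    fun i y => (Phi' u i (ψL y)).comp (ψL : (Fin 2 → ℝ) →L[ℝ] EuclideanSpace ℝ (Fin 2)) with hf'
  have hsum : ∀ y : Fin 2 → ℝ, (∑ i : Fin 2, f' i y (Pi.single i 1)) = g (ψL y) := by
    intro y
    have h := Phi'_sum huV (ψL y)
    simp only [hf', ContinuousLinearMap.comp_apply]
    have h2 : ∀ i : Fin 2, (ψL : (Fin 2 → ℝ) →L[ℝ] EuclideanSpace ℝ (Fin 2)) (Pi.single i 1)
        = EuclideanSpace.single i 1 := fun i => rfl
    simp only [h2]
    exact h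
  have hPhic : ∀ i, Continuous (Phi u i) := fun i =>
    Complex.continuous_im.comp (((Complex.continuous_conj).comp hu.continuous).mul
      (pd_contDiff hu i).continuous)
  have hDiv := integral_divergence_of_hasFDerivAt_off_countable' a b hle f f' ∅
    countable_empty
    (fun i => ((hPhic i).comp ψL.continuous).continuousOn)
    (fun y _ i => (hasFDerivAt_Phi hu i (ψL y)).comp y ψL.hasFDerivAt)
    (by
      apply ContinuousOn.integrableOn_compact isCompact_Icc
      have : (fun y => ∑ i : Fin 2, f' i y (Pi.single i 1)) = fun y => g (ψL y) :=
        funext hsum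
      rw [this]
      exact (hgc.comp ψL.continuous).continuousOn)
  have hLHS : (∫ y in Icc a b, ∑ i : Fin 2, f' i y (Pi.single i 1)) = ∫ x, g x := by
    rw [show (fun y => ∑ i : Fin 2, f' i y (Pi.single i 1)) = fun y => g (ψL y) from
      funext hsum]
    rw [setIntegral_eq_integral_of_forall_compl_eq_zero]
    · have hmp := (EuclideanSpace.volume_preserving_symm_measurableEquiv_toLp (Fin 2)).symm
      have := hmp.integral_comp' (f := (MeasurableEquiv.toLp 2 (Fin 2 → ℝ))) g
      exact this
    · intro y hy
      rw [Set.mem_Icc] at hy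
      push_neg at hy
      have : ∃ i : Fin 2, r < |y i| := by
        by_contra hcon
        push_neg at hcon
        refine hy ?_ ?_ <;> intro i <;>
          [skip; skip] <;> (have := hcon i; rw [abs_le] at this) <;>
          simp [ha, hb] <;> linarith [this.1, this.2]
      obtain ⟨i, hi⟩ := this
      have hRlt : R < ‖ψL y‖ := lt_of_le_of_lt hrR (lt_of_lt_of_le hi (hnorm_ge y i))
      simp [hg, hVsupp _ hRlt]
  have hface : ∀ (i : Fin 2) (c : ℝ), |c| = r →
      |∫ x in Icc (a ∘ i.succAbove) (b ∘ i.succAbove), f i (i.insertNth c x)|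
        ≤ 2 * (C ^ 2 / r ^ 2) := by
    intro i c hc
    have hptwise : ∀ x ∈ Icc (a ∘ i.succAbove) (b ∘ i.succAbove),
        ‖f i (i.insertNth c x)‖ ≤ C ^ 2 / r ^ 3 := by
      intro x _
      set z : Fin 2 → ℝ := i.insertNth c x with hzdef
      have hz : |z i| = r := by rw [hzdef, Fin.insertNth_apply_same, hc]
      have hzn : r ≤ ‖ψL z‖ := hz ▸ hnorm_ge z i
      have hzR : R ≤ ‖ψL z‖ := le_trans hrR hzn
      obtain ⟨h1, h2⟩ := hdecay (ψL z) hzR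
      have hD : ‖pd i u (ψL z)‖ ≤ C / ‖ψL z‖ ^ 2 := by
        refine le_trans ?_ h2
        have hs := Finset.single_le_sum (f := fun j => ‖pd j u (ψL z)‖ ^ 2)
          (fun j _ => by positivity) (Finset.mem_univ i)
        calc ‖pd i u (ψL z)‖ = Real.sqrt (‖pd i u (ψL z)‖ ^ 2) := by
              rw [Real.sqrt_sq (norm_nonneg _)]
          _ ≤ _ := Real.sqrt_le_sqrt hs
      have hn0 : (0:ℝ) < r := hr0
      have hzn0 : (0:ℝ) < ‖ψL z‖ := lt_of_lt_of_le hr0 hzn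
      have hfle : ‖f i z‖ ≤ ‖u (ψL z)‖ * ‖pd i u (ψL z)‖ := by
        have : f i z = ((starRingEnd ℂ) (u (ψL z)) * pd i u (ψL z)).im := rfl
        rw [this, Real.norm_eq_abs]
        calc |((starRingEnd ℂ) (u (ψL z)) * pd i u (ψL z)).im|
            ≤ ‖(starRingEnd ℂ) (u (ψL z)) * pd i u (ψL z)‖ :=
              Complex.abs_im_le_norm _
          _ = ‖(starRingEnd ℂ) (u (ψL z)) * pd i u (ψL z)‖ := rfl
          _ = ‖u (ψL z)‖ * ‖pd i u (ψL z)‖ := by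
              rw [norm_mul, RCLike.norm_conj]
      calc ‖f i z‖ ≤ ‖u (ψL z)‖ * ‖pd i u (ψL z)‖ := hfle
        _ ≤ (C / ‖ψL z‖) * (C / ‖ψL z‖ ^ 2) :=
            mul_le_mul h1 hD (norm_nonneg _) (by positivity)
        _ ≤ (C / r) * (C / r ^ 2) := by gcongr
        _ = C ^ 2 / r ^ 3 := by field_simp
    have hvol : (volume (Icc (a ∘ i.succAbove) (b ∘ i.succAbove))).toReal = 2 * r := by
      rw [Real.volume_Icc_pi_toReal (fun j => by simp [ha, hb]; linarith)]
      simp [ha, hb]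
      ring
    calc |∫ x in Icc (a ∘ i.succAbove) (b ∘ i.succAbove), f i (i.insertNth c x)|
        ≤ (C ^ 2 / r ^ 3) * (volume (Icc (a ∘ i.succAbove) (b ∘ i.succAbove))).toReal :=
          norm_setIntegral_le_of_norm_le_const (measure_Icc_lt_top) hptwise
      _ = (C ^ 2 / r ^ 3) * (2 * r) := by rw [hvol]
      _ = 2 * (C ^ 2 / r ^ 2) := by field_simp
  rw [← hLHS, hDiv]
  have hb2 : ∀ i : Fin 2,
      ((∫ x in Icc (a ∘ i.succAbove) (b ∘ i.succAbove), f i (i.insertNth (b i) x))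
        - ∫ x in Icc (a ∘ i.succAbove) (b ∘ i.succAbove), f i (i.insertNth (a i) x))
        ≤ 4 * (C ^ 2 / r ^ 2) := by
    intro i
    have h1 := hface i (b i) (by simp [hb, abs_of_pos hr0])
    have h2 := hface i (a i) (by simp [ha, abs_of_pos hr0])
    have := abs_le.mp h1
    have := abs_le.mp h2
    have e1 := (abs_le.mp h1).2
    have e2 := (abs_le.mp h2).1
    have : (∫ x in Icc (a ∘ i.succAbove) (b ∘ i.succAbove), f i (i.insertNth (a i) x))
        ≥ -(2 * (C ^ 2 / r ^ 2)) := e2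
    linarith
  calc (∑ i : Fin 2,
      ((∫ x in Icc (a ∘ i.succAbove) (b ∘ i.succAbove), f i (i.insertNth (b i) x))
        - ∫ x in Icc (a ∘ i.succAbove) (b ∘ i.succAbove), f i (i.insertNth (a i) x)))
      ≤ ∑ i : Fin 2, 4 * (C ^ 2 / r ^ 2) := Finset.sum_le_sum (fun i _ => hb2 i)
    _ = 8 * C ^ 2 / r ^ 2 := by simp [Finset.sum_const]; ring

/-- For a compactly supported continuous potential with `Im V ≥ 0` on `ℝ²`, any solution
of `Δu = V u` decaying like `O(‖x‖⁻¹)` (with gradient `O(‖x‖⁻²)`) satisfies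
`Im V(x) |u(x)|² = 0` everywhere. -/
theorem im_V_u_sq_vanishes (R : ℝ) (V u : EuclideanSpace ℝ (Fin 2) → ℂ)
    (hV : Continuous V) (hVsupp : ∀ x : EuclideanSpace ℝ (Fin 2), R < ‖x‖ → V x = 0)
    (hVim : ∀ x, 0 ≤ (V x).im)
    (hu : ContDiff ℝ 2 u) (huV : ∀ x, lap u x = V x * u x)
    (C : ℝ)
    (hdecay : ∀ x : EuclideanSpace ℝ (Fin 2), R ≤ ‖x‖ →
      ‖u x‖ ≤ C / ‖x‖ ∧ Real.sqrt (∑ i : Fin 2, ‖pd i u x‖ ^ 2) ≤ C / ‖x‖ ^ 2) :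
    ∀ x, (V x).im * ‖u x‖ ^ 2 = 0 := by
  set g : EuclideanSpace ℝ (Fin 2) → ℝ := fun x => (V x).im * ‖u x‖ ^ 2 with hg
  have hgc : Continuous g := (Complex.continuous_im.comp hV).mul ((hu.continuous.norm).pow 2)
  have hgnn : ∀ x, 0 ≤ g x := fun x => mul_nonneg (hVim x) (by positivity)
  have hC : 0 ≤ C := by
    set x0 : EuclideanSpace ℝ (Fin 2) := EuclideanSpace.single 0 (max R 1) with hx0d
    have hx0 : ‖x0‖ = max R 1 := by
      rw [hx0d, EuclideanSpace.norm_single, Real.norm_eq_abs,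
        abs_of_pos (lt_of_lt_of_le one_pos (le_max_right R 1))]
    have h := (hdecay x0 (by rw [hx0]; exact le_max_left R 1)).1
    have h0 : 0 < ‖x0‖ := by rw [hx0]; exact lt_of_lt_of_le one_pos (le_max_right R 1)
    have h1 : 0 ≤ C / ‖x0‖ := le_trans (norm_nonneg _) h
    have h2 : C = C / ‖x0‖ * ‖x0‖ := (div_mul_cancel₀ C (ne_of_gt h0)).symm
    rw [h2]; exact mul_nonneg h1 (le_of_lt h0)
  have hcs : HasCompactSupport g := by
    apply HasCompactSupport.intro (isCompact_closedBall (0 : EuclideanSpace ℝ (Fin 2)) |R|)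
    intro x hx
    rw [Metric.mem_closedBall, dist_zero_right, not_le] at hx
    have : R < ‖x‖ := lt_of_le_of_lt (le_abs_self R) hx
    simp [hg, hVsupp x this]
  have hInt : Integrable g := hgc.integrable_of_hasCompactSupport hcs
  have hI0 : (0:ℝ) ≤ ∫ x, g x := integral_nonneg hgnn
  have hIle : (∫ x, g x) ≤ 0 := by
    have htend : Filter.Tendsto (fun r : ℝ => 8 * C ^ 2 / r ^ 2) Filter.atTop (nhds 0) :=
      Filter.Tendsto.div_atTop tendsto_const_nhds (Filter.tendsto_pow_atTop (two_ne_zero))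
    refine ge_of_tendsto htend ?_
    filter_upwards [Filter.eventually_ge_atTop (max R 1)] with r hr
    exact key_bound R V u hV hVsupp hu huV C hC hdecay r
      (le_trans (le_max_left R 1) hr) (le_trans (le_max_right R 1) hr)
  have hI : (∫ x, g x) = 0 := le_antisymm hIle hI0
  have hae : g =ᵐ[volume] 0 := (integral_eq_zero_iff_of_nonneg hgnn hInt).mp hI
  have hg0 : g = 0 := (hgc.ae_eq_iff_eq volume continuous_const).mp hae
  exact fun x => congrFun hg0 x
end

section
/- Let H be a complex Hilbert space and let J : H → H be a map satisfying J(u + v) = J u + J v, J(c·u) = conj(c)·J u, J(J u) = u, and ⟪J u, J v⟫ = ⟪v, u⟫ for all u, v ∈ H and c ∈ ℂ. Let T be a densely defined linear operator on H with adjoint T†, and suppose that for every u in the domain of T, J u lies in the domain of T† and J(T†(J u)) = T u. Let z ∈ ℂ and suppose R : H → H is a bounded linear operator such that R f lies in the domain of T and T(R f) − z·(R f) = f for every f ∈ H, and R(T u − z·u) = u for every u in the domain of T. Then the (Hilbert-space) adjoint R* of R satisfies R* f = J(R(J f)) for every f ∈ H. -/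
/-- Abstract form of Lemma 2.2 of the paper: if an antilinear conjugation `J` intertwines
a densely defined operator `T` with its adjoint (`J T† J = T` on the domain), and `R` is a
two-sided bounded inverse of `T - z`, then the adjoint of `R` satisfies `R* = J R J`. -/
theorem adjoint_resolvent_conj
    {H : Type*} [NormedAddCommGroup H] [InnerProductSpace ℂ H] [CompleteSpace H]
    (J : H → H)
    (hJadd : ∀ u v : H, J (u + v) = J u + J v)
    (hJsmul : ∀ (c : ℂ) (u : H), J (c • u) = (starRingEnd ℂ) c • J u)
    (hJinv : ∀ u : H, J (J u) = u)
    (hJinner : ∀ u v : H, (inner ℂ (J u) (J v) : ℂ) = inner ℂ v u)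
    (T : H →ₗ.[ℂ] H) (hT : Dense (T.domain : Set H))
    (hJT : ∀ u : T.domain, ∃ h : J (u : H) ∈ T.adjoint.domain,
      J (T.adjoint ⟨J (u : H), h⟩) = T u)
    (z : ℂ) (R : H →L[ℂ] H)
    (hR1 : ∀ f : H, ∃ h : R f ∈ T.domain, T ⟨R f, h⟩ - z • R f = f)
    (hR2 : ∀ u : T.domain, R (T u - z • (u : H)) = (u : H)) :
    ∀ f : H, ContinuousLinearMap.adjoint R f = J (R (J f)) := by
  intro f
  apply ext_inner_right ℂ
  intro g
  obtain ⟨hu, hu2⟩ := hR1 (J f)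
  set u : T.domain := ⟨R (J f), hu⟩ with hu_def
  obtain ⟨hv, hv2⟩ := hR1 g
  set v : T.domain := ⟨R g, hv⟩ with hv_def
  obtain ⟨hJu, hJu2⟩ := hJT u
  have hadj : (T.adjoint ⟨J (u : H), hJu⟩ : H) = J (T u) := by
    rw [← hJu2, hJinv]
  have hformal := T.adjoint_isFormalAdjoint hT ⟨J (u : H), hJu⟩ v
  have h1 : (inner ℂ (J (u : H)) (T v) : ℂ) = inner ℂ (J (v : H)) (T u) := by
    rw [← hformal]
    show (inner ℂ (T.adjoint ⟨J (u : H), hJu⟩ : H) (v : H) : ℂ) = _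
    rw [hadj]
    calc (inner ℂ (J (T u)) (v : H) : ℂ)
        = inner ℂ (J (T u)) (J (J (v : H))) := by rw [hJinv]
      _ = inner ℂ (J (v : H)) (T u) := hJinner _ _
  have h2 : (inner ℂ (J (u : H)) (v : H) : ℂ) = inner ℂ (J (v : H)) (u : H) := by
    calc (inner ℂ (J (u : H)) (v : H) : ℂ)
        = inner ℂ (J (u : H)) (J (J (v : H))) := by rw [hJinv]
      _ = inner ℂ (J (v : H)) (u : H) := hJinner _ _
  have hg : (g : H) = T v - z • (v : H) := hv2.symm
  have hJf : (J f : H) = T u - z • (u : H) := hu2.symm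
  calc (inner ℂ (ContinuousLinearMap.adjoint R f) g : ℂ)
      = inner ℂ f (R g) := ContinuousLinearMap.adjoint_inner_left R g f
    _ = inner ℂ (J (J f)) (J (J (R g))) := by rw [hJinv, hJinv]
    _ = inner ℂ (J (R g)) (J f) := hJinner _ _
    _ = inner ℂ (J (v : H)) (T u - z • (u : H)) := by rw [hJf]
    _ = inner ℂ (J (v : H)) (T u) - z * inner ℂ (J (v : H)) (u : H) := by
        rw [inner_sub_right, inner_smul_right]
    _ = inner ℂ (J (u : H)) (T v) - z * inner ℂ (J (u : H)) (v : H) := by rw [h1, h2]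
    _ = inner ℂ (J (u : H)) (T v - z • (v : H)) := by
        rw [inner_sub_right, inner_smul_right]
    _ = inner ℂ (J (R (J f))) g := by rw [← hg]
end

section
/- Let λ₀ ∈ (0,1) and let c_{j,k} ∈ ℂ for j ∈ ℕ and 0 ≤ k ≤ 2j+1. Suppose that for every λ ∈ (0, λ₀), the double series Σ_{j=0}^∞ Σ_{k=0}^{2j+1} |c_{j,k}| λ^{2j} |log λ|^k converges, and Σ_{j=0}^∞ Σ_{k=0}^{2j+1} c_{j,k} λ^{2j} (log λ)^k = 0. Then c_{j,k} = 0 for all j and k. -/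
open Filter Real Finset

lemma aux_log_tendsto : Tendsto (fun x : ℝ => |Real.log x|) (nhdsWithin 0 (Set.Ioi 0)) atTop :=
  tendsto_abs_atBot_atTop.comp Real.tendsto_log_nhdsGT_zero

lemma aux_pow_log (a m : ℕ) (ha : 0 < a) :
    Tendsto (fun x : ℝ => x ^ a * |Real.log x| ^ m) (nhdsWithin 0 (Set.Ioi 0)) (nhds 0) := by
  have hcomp : Tendsto (fun x : ℝ => -Real.log x) (nhdsWithin 0 (Set.Ioi 0)) atTop :=
    tendsto_neg_atBot_atTop.comp Real.tendsto_log_nhdsGT_zero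
  have h := (tendsto_rpow_mul_exp_neg_mul_atTop_nhds_zero m a (by exact_mod_cast ha)).comp hcomp
  refine h.congr' ?_
  filter_upwards [Ioo_mem_nhdsGT_of_mem (⟨le_refl 0, one_pos⟩ : (0:ℝ) ∈ Set.Ico 0 1)] with x hx
  obtain ⟨hx0, hx1⟩ := hx
  have hlog : Real.log x < 0 := Real.log_neg hx0 hx1
  have h2 : -(a:ℝ) * -Real.log x = Real.log (x ^ a) := by rw [Real.log_pow]; ring
  simp only [Function.comp]
  rw [Real.rpow_natCast, h2, Real.exp_log (pow_pos hx0 a), abs_of_neg hlog, mul_comm]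

/-- Uniqueness of coefficients for expansions `Σ_{j,k} c_{j,k} λ^{2j} (log λ)^k`
(with `0 ≤ k ≤ 2j+1`) on an interval `(0, λ₀)`: if such an absolutely convergent
expansion vanishes identically, then all coefficients vanish. -/
theorem coefficient_uniqueness (lam₀ : ℝ) (h₀ : lam₀ ∈ Set.Ioo (0 : ℝ) 1)
    (c : ℕ → ℕ → ℂ)
    (hconv : ∀ lam : ℝ, lam ∈ Set.Ioo (0 : ℝ) lam₀ →
      Summable (fun j : ℕ => ∑ k ∈ Finset.range (2 * j + 2),
        ‖c j k‖ * lam ^ (2 * j) * |Real.log lam| ^ k))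
    (hzero : ∀ lam : ℝ, lam ∈ Set.Ioo (0 : ℝ) lam₀ →
      ∑' j : ℕ, ∑ k ∈ Finset.range (2 * j + 2),
        c j k * (lam : ℂ) ^ (2 * j) * ((Real.log lam : ℝ) : ℂ) ^ k = 0) :
    ∀ j k : ℕ, k ≤ 2 * j + 1 → c j k = 0 := by
  obtain ⟨hl0, hl1⟩ := h₀
  set μ : ℝ := lam₀ / 2 with hμdef
  have hμ0 : 0 < μ := by positivity
  have hμlt : μ < lam₀ := by rw [hμdef]; linarith
  have hμ1 : μ < 1 := lt_trans hμlt hl1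
  have hlogμ : Real.log μ < 0 := Real.log_neg hμ0 hμ1
  set d : ℝ := |Real.log μ| with hddef
  have hd0 : 0 < d := abs_pos.mpr (ne_of_lt hlogμ)
  set A : ℕ → ℝ := fun j => ∑ k ∈ Finset.range (2 * j + 2), ‖c j k‖ * μ ^ (2 * j) * d ^ k
    with hAdef
  have hA : Summable A := hconv μ ⟨hμ0, hμlt⟩
  have hAnn : ∀ j, 0 ≤ A j := fun j => Finset.sum_nonneg (fun k _ => by positivity)
  set S : ℝ := ∑' j, A j with hSdef
  have core : ∀ N k : ℕ, k ≤ 2 * N + 1 →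
      (∀ j' k' : ℕ, j' < N → k' ≤ 2 * j' + 1 → c j' k' = 0) →
      (∀ k' : ℕ, k < k' → k' ≤ 2 * N + 1 → c N k' = 0) → c N k = 0 := by
    intro N k hk hlow hhigh
    set C : ℝ := S / (d * (μ * d) ^ (2 * N + 2)) with hCdef
    set H : ℝ → ℝ := fun lam => C * (lam ^ 2 * |Real.log lam| ^ (2 * N + 3 - k)) +
      ∑ k' ∈ Finset.range k, ‖c N k'‖ * (|Real.log lam| ^ k' / |Real.log lam| ^ k) with hHdef
    -- H tends to 0
    have hHt : Tendsto H (nhdsWithin 0 (Set.Ioi 0)) (nhds 0) := by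
      have t1 : Tendsto (fun lam : ℝ => C * (lam ^ 2 * |Real.log lam| ^ (2 * N + 3 - k)))
          (nhdsWithin 0 (Set.Ioi 0)) (nhds (C * 0)) :=
        (aux_pow_log 2 (2 * N + 3 - k) two_pos).const_mul C
      have t2 : Tendsto (fun lam : ℝ => ∑ k' ∈ Finset.range k,
          ‖c N k'‖ * (|Real.log lam| ^ k' / |Real.log lam| ^ k))
          (nhdsWithin 0 (Set.Ioi 0)) (nhds (∑ k' ∈ Finset.range k, ‖c N k'‖ * 0)) := by
        refine tendsto_finset_sum _ (fun k' hk' => ?_)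
        have hklt : k' < k := Finset.mem_range.mp hk'
        have := (tendsto_pow_div_pow_atTop_zero (𝕜 := ℝ) hklt).comp aux_log_tendsto
        exact (this.const_mul _)
      have := t1.add t2
      simpa using this
    -- eventual bound ‖c N k‖ ≤ H lam
    have hev : ∀ᶠ lam in nhdsWithin 0 (Set.Ioi 0), ‖c N k‖ ≤ H lam := by
      have hsm0 : Tendsto (fun lam : ℝ => lam * |Real.log lam|)
          (nhdsWithin 0 (Set.Ioi 0)) (nhds 0) := by
        have := aux_pow_log 1 1 one_pos
        simpa using this
      have hsmall : ∀ᶠ lam in nhdsWithin 0 (Set.Ioi 0), lam * |Real.log lam| < μ * d :=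
        hsm0.eventually (gt_mem_nhds (by positivity))
      filter_upwards [hsmall,
        Ioo_mem_nhdsGT_of_mem (⟨le_refl 0, hμ0⟩ : (0:ℝ) ∈ Set.Ico 0 μ)] with lam hsm hmem
      obtain ⟨hlam0, hlamμ⟩ := hmem
      set L : ℝ := |Real.log lam| with hLdef
      have hlam1 : lam < 1 := lt_trans hlamμ hμ1
      have hlamlt : lam < lam₀ := lt_trans hlamμ hμlt
      have hloglam : Real.log lam < 0 := Real.log_neg hlam0 hlam1
      have hL0 : 0 < L := abs_pos.mpr (ne_of_lt hloglam)
      have hdL : d ≤ L := by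
        rw [hLdef, hddef, abs_of_neg hloglam, abs_of_neg hlogμ]
        have := Real.log_lt_log hlam0 hlamμ
        linarith
      have hρle : lam * L ≤ μ * d := le_of_lt hsm
      set ρ : ℝ := (lam * L) / (μ * d) with hρdef
      have hρ0 : 0 ≤ ρ := by positivity
      have hρ1 : ρ ≤ 1 := (div_le_one (by positivity)).mpr hρle
      set Lc : ℂ := ((Real.log lam : ℝ) : ℂ) with hLcdef
      set f : ℕ → ℂ := fun j => ∑ k' ∈ Finset.range (2 * j + 2),
        c j k' * (lam : ℂ) ^ (2 * j) * Lc ^ k' with hfdef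
      set B : ℕ → ℝ := fun j => ∑ k' ∈ Finset.range (2 * j + 2),
        ‖c j k'‖ * lam ^ (2 * j) * L ^ k' with hBdef
      have hBsum : Summable B := hconv lam ⟨hlam0, hlamlt⟩
      have hnormterm : ∀ (j k' : ℕ), ‖c j k' * (lam : ℂ) ^ (2 * j) * Lc ^ k'‖ =
          ‖c j k'‖ * lam ^ (2 * j) * L ^ k' := by
        intro j k'
        rw [norm_mul, norm_mul, norm_pow, norm_pow, hLcdef, Complex.norm_real,
          Complex.norm_real, Real.norm_eq_abs, Real.norm_eq_abs, abs_of_pos hlam0]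
      have hnf : ∀ j, ‖f j‖ ≤ B j := by
        intro j
        refine (norm_sum_le _ _).trans (le_of_eq ?_)
        exact Finset.sum_congr rfl (fun k' _ => hnormterm j k')
      have hfs : Summable f := Summable.of_norm_bounded hBsum hnf
      have hzero' : ∑' j, f j = 0 := by
        simp only [hfdef]; exact hzero lam ⟨hlam0, hlamlt⟩
      have hsplit := Summable.sum_add_tsum_nat_add (f := f) (N + 1) hfs
      set T : ℂ := ∑' i, f (i + (N + 1)) with hTdef
      rw [hzero'] at hsplit
      have hlowsum : ∑ i ∈ Finset.range N, f i = 0 := by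
        refine Finset.sum_eq_zero (fun i hi => ?_)
        simp only [hfdef]
        refine Finset.sum_eq_zero (fun k' hk' => ?_)
        rw [hlow i k' (Finset.mem_range.mp hi) (by have := Finset.mem_range.mp hk'; omega)]
        ring
      have hfN : f N = (∑ k' ∈ Finset.range k, c N k' * (lam : ℂ) ^ (2 * N) * Lc ^ k') +
          c N k * (lam : ℂ) ^ (2 * N) * Lc ^ k := by
        simp only [hfdef]
        rw [← Finset.sum_range_succ]
        refine (Finset.sum_subset (Finset.range_subset_range.mpr (by omega)) ?_).symm
        intro x hx hnx
        rw [hhigh x (by have := Finset.mem_range.not.mp hnx; omega)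
          (by have := Finset.mem_range.mp hx; omega)]
        ring
      rw [Finset.sum_range_succ, hlowsum, zero_add, hfN] at hsplit
      have heq : c N k * (lam : ℂ) ^ (2 * N) * Lc ^ k =
          -(∑ k' ∈ Finset.range k, c N k' * (lam : ℂ) ^ (2 * N) * Lc ^ k') - T := by
        linear_combination hsplit
      have hnorm : ‖c N k‖ * lam ^ (2 * N) * L ^ k ≤
          (∑ k' ∈ Finset.range k, ‖c N k'‖ * lam ^ (2 * N) * L ^ k') + ‖T‖ := by
        calc ‖c N k‖ * lam ^ (2 * N) * L ^ k = ‖c N k * (lam : ℂ) ^ (2 * N) * Lc ^ k‖ :=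
              (hnormterm N k).symm
          _ = ‖-(∑ k' ∈ Finset.range k, c N k' * (lam : ℂ) ^ (2 * N) * Lc ^ k') - T‖ := by
              rw [heq]
          _ ≤ ‖∑ k' ∈ Finset.range k, c N k' * (lam : ℂ) ^ (2 * N) * Lc ^ k'‖ + ‖T‖ := by
              refine (norm_sub_le _ _).trans ?_
              rw [norm_neg]
          _ ≤ (∑ k' ∈ Finset.range k, ‖c N k'‖ * lam ^ (2 * N) * L ^ k') + ‖T‖ := by
              refine add_le_add_left ((norm_sum_le _ _).trans (le_of_eq ?_)) _
              exact Finset.sum_congr rfl (fun k' _ => hnormterm N k')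
      -- bound on each B j
      have hkey : ∀ (j k' : ℕ), k' ≤ 2 * j + 1 →
          lam ^ (2 * j) * L ^ k' ≤ (L / d) * ρ ^ (2 * j) * (μ ^ (2 * j) * d ^ k') := by
        intro j k' hk'
        have hmain : L ^ k' * d ^ (2 * j + 1) ≤ L ^ (2 * j + 1) * d ^ k' := by
          have e1 : L ^ k' * d ^ (2 * j + 1) = (L ^ k' * d ^ k') * d ^ (2 * j + 1 - k') := by
            rw [mul_assoc, ← pow_add]; congr 2; omega
          have e2 : L ^ (2 * j + 1) * d ^ k' = (L ^ k' * d ^ k') * L ^ (2 * j + 1 - k') := by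
            have e3 : L ^ (2 * j + 1) = L ^ k' * L ^ (2 * j + 1 - k') := by
              rw [← pow_add]; congr 1; omega
            rw [e3]; ring
          rw [e1, e2]
          exact mul_le_mul_of_nonneg_left (pow_le_pow_left₀ hd0.le hdL _) (by positivity)
        have hrw : (L / d) * ρ ^ (2 * j) * (μ ^ (2 * j) * d ^ k') =
            (lam ^ (2 * j) * (L ^ (2 * j + 1) * d ^ k')) / d ^ (2 * j + 1) := by
          rw [hρdef, div_pow, mul_pow, mul_pow]
          field_simp
          ring
        rw [hrw, le_div_iff₀ (by positivity)]
        calc lam ^ (2 * j) * L ^ k' * d ^ (2 * j + 1)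
            = lam ^ (2 * j) * (L ^ k' * d ^ (2 * j + 1)) := by ring
          _ ≤ lam ^ (2 * j) * (L ^ (2 * j + 1) * d ^ k') :=
              mul_le_mul_of_nonneg_left hmain (by positivity)
      have hBb : ∀ j, B j ≤ (L / d) * ρ ^ (2 * j) * A j := by
        intro j
        have hrw : (L / d) * ρ ^ (2 * j) * A j = ∑ k' ∈ Finset.range (2 * j + 2),
            (L / d) * ρ ^ (2 * j) * (‖c j k'‖ * μ ^ (2 * j) * d ^ k') := by
          rw [hAdef, Finset.mul_sum]
        rw [hrw, hBdef]
        refine Finset.sum_le_sum (fun k' hk' => ?_)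
        have h1 := hkey j k' (by have := Finset.mem_range.mp hk'; omega)
        calc ‖c j k'‖ * lam ^ (2 * j) * L ^ k' = ‖c j k'‖ * (lam ^ (2 * j) * L ^ k') := by ring
          _ ≤ ‖c j k'‖ * ((L / d) * ρ ^ (2 * j) * (μ ^ (2 * j) * d ^ k')) :=
              mul_le_mul_of_nonneg_left h1 (norm_nonneg _)
          _ = (L / d) * ρ ^ (2 * j) * (‖c j k'‖ * μ ^ (2 * j) * d ^ k') := by ring
      -- bound on T
      have hBnn : ∀ j, 0 ≤ B j := fun j => Finset.sum_nonneg (fun k' _ => by positivity)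
      have hnorm_shift : Summable (fun i => ‖f (i + (N + 1))‖) := by
        refine Summable.of_nonneg_of_le (fun _ => norm_nonneg _) (fun i => hnf _) ?_
        exact (summable_nat_add_iff (N + 1)).mpr hBsum
      have hTb : ‖T‖ ≤ (L / d) * ρ ^ (2 * N + 2) * S := by
        have h1 : ‖T‖ ≤ ∑' i, ‖f (i + (N + 1))‖ := norm_tsum_le_tsum_norm hnorm_shift
        have h2 : ∑' i, ‖f (i + (N + 1))‖ ≤
            ∑' i, ((L / d) * ρ ^ (2 * N + 2)) * A (i + (N + 1)) := by
          refine Summable.tsum_le_tsum (fun i => ?_) hnorm_shift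
            (((summable_nat_add_iff (N + 1)).mpr hA).mul_left _)
          refine (hnf _).trans ((hBb _).trans ?_)
          have hpow : ρ ^ (2 * (i + (N + 1))) ≤ ρ ^ (2 * N + 2) :=
            pow_le_pow_of_le_one hρ0 hρ1 (by omega)
          calc (L / d) * ρ ^ (2 * (i + (N + 1))) * A (i + (N + 1))
              ≤ (L / d) * ρ ^ (2 * N + 2) * A (i + (N + 1)) :=
                mul_le_mul_of_nonneg_right
                  (mul_le_mul_of_nonneg_left hpow (by positivity)) (hAnn _)
            _ = ((L / d) * ρ ^ (2 * N + 2)) * A (i + (N + 1)) := by ring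
        have h3 : ∑' i, ((L / d) * ρ ^ (2 * N + 2)) * A (i + (N + 1)) =
            ((L / d) * ρ ^ (2 * N + 2)) * ∑' i, A (i + (N + 1)) := tsum_mul_left
        have h4 : ∑' i, A (i + (N + 1)) ≤ S := by
          have h5 := Summable.sum_add_tsum_nat_add (f := A) (N + 1) hA
          have h6 : 0 ≤ ∑ i ∈ Finset.range (N + 1), A i :=
            Finset.sum_nonneg (fun i _ => hAnn i)
          rw [hSdef]
          linarith
        refine h1.trans (h2.trans ?_)
        rw [h3]
        exact mul_le_mul_of_nonneg_left h4 (by positivity)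
      -- final assembly
      have hDpos : (0:ℝ) < lam ^ (2 * N) * L ^ k := by positivity
      have hstep : ‖c N k‖ ≤
          ((∑ k' ∈ Finset.range k, ‖c N k'‖ * lam ^ (2 * N) * L ^ k') + ‖T‖) /
            (lam ^ (2 * N) * L ^ k) := by
        rw [le_div_iff₀ hDpos]
        calc ‖c N k‖ * (lam ^ (2 * N) * L ^ k) = ‖c N k‖ * lam ^ (2 * N) * L ^ k := by ring
          _ ≤ _ := hnorm
      refine hstep.trans ?_
      simp only [hHdef, ← hLdef]
      rw [add_div]
      rw [add_comm (C * (lam ^ 2 * L ^ (2 * N + 3 - k)))]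
      refine add_le_add ?_ ?_
      · rw [Finset.sum_div]
        refine le_of_eq (Finset.sum_congr rfl (fun k' _ => ?_))
        rw [mul_assoc, mul_div_assoc, mul_div_mul_left _ _ (ne_of_gt (pow_pos hlam0 (2 * N)))]
      · rw [div_le_iff₀ hDpos]
        refine hTb.trans (le_of_eq ?_)
        have e3 : lam ^ (2 * N) * lam ^ 2 = lam ^ (2 * N + 2) := by rw [← pow_add]
        have e4 : L ^ (2 * N + 3 - k) * L ^ k = L ^ (2 * N + 3) := by
          rw [← pow_add]; congr 1; omega
        have erhs : C * (lam ^ 2 * L ^ (2 * N + 3 - k)) * (lam ^ (2 * N) * L ^ k) =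
            C * lam ^ (2 * N + 2) * L ^ (2 * N + 3) := by
          calc C * (lam ^ 2 * L ^ (2 * N + 3 - k)) * (lam ^ (2 * N) * L ^ k)
              = C * (lam ^ (2 * N) * lam ^ 2) * (L ^ (2 * N + 3 - k) * L ^ k) := by ring
            _ = C * lam ^ (2 * N + 2) * L ^ (2 * N + 3) := by rw [e3, e4]
        rw [erhs, hCdef, hρdef]
        rw [div_pow, mul_pow, mul_pow]
        field_simp
        ring
    have := ge_of_tendsto hHt hev
    exact norm_le_zero_iff.mp (by linarith)
  -- assemble inductions
  intro j
  induction j using Nat.strong_induction_on with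
  | _ N ih =>
    suffices H2 : ∀ i k : ℕ, 2 * N + 1 ≤ k + i → k ≤ 2 * N + 1 → c N k = 0 by
      intro k hk; exact H2 (2 * N + 1 - k) k (by omega) hk
    intro i
    induction i with
    | zero =>
      intro k h1 h2
      exact core N k h2 (fun j' k' hj hk' => ih j' hj k' hk')
        (fun k' hk1 hk2 => absurd (by omega : k' ≤ k) (by omega))
    | succ i ihi =>
      intro k h1 h2
      exact core N k h2 (fun j' k' hj hk' => ih j' hj k' hk')
        (fun k' hk1 hk2 => ihi k' (by omega) hk2)
end
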